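/- arXiv:1412.2599 — 13 statements merged into one kernel-verified Lean document; each statement's English description precedes it below -/
import Mathlib

section
/- Let q be a positive odd integer, m ≥ 2, and let s, s' ∈ ℤ^m have all coordinates coprime to q. Let σ be a permutation of {1,…,m}, let ε_1,…,ε_m ∈ {±1}, and let φ be the associated signed-permutation map. Then φ(𝓛(q;s)) = 𝓛(q;s') if and only if there exists an integer ℓ coprime to q such that ℓ·ε_j·s_j ≡ s'_{σ(j)} (mod q) for every j ∈ {1,…,m}. -/
/-- The signed-permutation map associated to a permutation `σ` of `{1,…,m}` and signs
`ε_1,…,ε_m`: it sends `½(a_1,…,a_m)` to `½(b_1,…,b_m)` where `b_{σ(j)} = ε_j · a_j`.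
We encode a half-odd-integer vector `μ = ½(a_1,…,a_m)` by its numerator vector `a`. -/
def signedPerm {m : ℕ} (σ : Equiv.Perm (Fin m)) (ε : Fin m → ℤ) (a : Fin m → ℤ) :
    Fin m → ℤ :=
  fun i => ε (σ.symm i) * a (σ.symm i)

/-- The affine congruence lattice `𝓛(q;s)`, encoded by numerator vectors:
`½(a_1,…,a_m) ∈ 𝓛(q;s)` iff all `a_j` are odd and `∑_j a_j s_j ≡ 0 (mod q)`. -/
def affLat (q : ℕ) {m : ℕ} (s : Fin m → ℤ) : Set (Fin m → ℤ) :=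
  {a | (∀ j, Odd (a j)) ∧ (q : ℤ) ∣ ∑ j, a j * s j}

lemma aux_dvd_iff (q : ℕ) (x : ℤ) : (q:ℤ) ∣ x ↔ (x : ZMod q) = 0 :=
  (ZMod.intCast_zmod_eq_zero_iff_dvd x q).symm

lemma aux_odd_rep (q : ℕ) (hqodd : Odd q) (r : ℤ) :
    ∃ x : ℤ, Odd x ∧ (q:ℤ) ∣ x - r := by
  rcases Int.even_or_odd r with he | ho
  · exact ⟨r + q, he.add_odd ((Int.odd_coe_nat q).mpr hqodd), by simp⟩
  · exact ⟨r, ho, by simp⟩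

lemma aux_subset (q m : ℕ) (u v : Fin m → ℤ) (ℓ : ℤ)
    (hl : ∀ i, (q:ℤ) ∣ ℓ * u i - v i) : affLat q u ⊆ affLat q v := by
  rintro a ⟨hodd, hdvd⟩
  refine ⟨hodd, ?_⟩
  rw [aux_dvd_iff] at hdvd ⊢
  push_cast at hdvd ⊢
  have hv : ∀ i, (v i : ZMod q) = (ℓ : ZMod q) * (u i : ZMod q) := by
    intro i
    have := (aux_dvd_iff q _).mp (hl i)
    push_cast at this
    linear_combination -this
  calc ∑ j, (a j : ZMod q) * (v j : ZMod q)
      = (ℓ : ZMod q) * ∑ j, (a j : ZMod q) * (u j : ZMod q) := by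
        rw [Finset.mul_sum]; exact Finset.sum_congr rfl fun j _ => by rw [hv j]; ring
    _ = 0 := by rw [hdvd, mul_zero]

lemma aux_key (q m : ℕ) (hq : 0 < q) (hqodd : Odd q) (hm : 0 < m)
    (u v : Fin m → ℤ) (hu : ∀ i, IsCoprime (u i) (q:ℤ)) (hv : ∀ i, IsCoprime (v i) (q:ℤ)) :
    affLat q u = affLat q v ↔
      ∃ ℓ : ℤ, IsCoprime ℓ (q:ℤ) ∧ ∀ i, (q:ℤ) ∣ ℓ * u i - v i := by
  constructor
  · intro heq
    set j₀ : Fin m := ⟨0, hm⟩ with hj₀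
    obtain ⟨w, z, hw⟩ := hu j₀
    refine ⟨v j₀ * w, (hv j₀).mul_left ⟨u j₀, z, by linear_combination hw⟩, ?_⟩
    have hsum : ∀ (t : Fin m → ℤ) (i : Fin m), i ≠ j₀ → ∀ (x y : ℤ),
        ∑ j, (if j = j₀ then x else if j = i then y else 1) * t j
          = ((x - 1) * t j₀ + (y - 1) * t i) + ∑ j, t j := by
      intro t i hi x y
      have h1 : ∀ j : Fin m, (if j = j₀ then x else if j = i then y else 1) * t j
          = ((if j = j₀ then x else if j = i then y else 1) - 1) * t j + t j := fun j => by ring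
      have h2 : ∑ j, ((if j = j₀ then x else if j = i then y else 1) - 1) * t j
          = (x - 1) * t j₀ + (y - 1) * t i := by
        rw [← Finset.add_sum_erase _ _ (Finset.mem_univ j₀),
          Finset.sum_eq_single_of_mem i (Finset.mem_erase.mpr ⟨hi, Finset.mem_univ i⟩)
            (fun b hb hbi => by simp [(Finset.mem_erase.mp hb).1, hbi])]
        simp [hi]
      rw [Finset.sum_congr rfl fun j _ => h1 j, Finset.sum_add_distrib, h2]
    intro i
    by_cases hi : i = j₀
    · rw [hi]
      exact ⟨-(v j₀ * z), by linear_combination v j₀ * hw⟩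
    -- construction of lattice elements
    have hcon : ∀ y : ℤ, Odd y → ∃ x : ℤ, Odd x ∧
        (fun j => if j = j₀ then x else if j = i then y else 1) ∈ affLat q u := by
      intro y hy
      set c : ℤ := u j₀ - ((y - 1) * u i + ∑ j, u j) with hc
      obtain ⟨x, hxodd, hxr⟩ := aux_odd_rep q hqodd (w * c)
      obtain ⟨k, hk⟩ := hxr
      refine ⟨x, hxodd, ?_, ?_⟩
      · intro j
        dsimp only
        split_ifs
        · exact hxodd
        · exact hy
        · exact odd_one
      · show (q:ℤ) ∣ ∑ j, (if j = j₀ then x else if j = i then y else 1) * u j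
        rw [hsum u i hi x y]
        exact ⟨k * u j₀ - z * c, by linear_combination u j₀ * hk + c * hw⟩
    obtain ⟨x₁, hx₁, mem₁⟩ := hcon 1 odd_one
    obtain ⟨x₂, hx₂, mem₂⟩ := hcon 3 ⟨1, by norm_num⟩
    have mem₁' : (fun j => if j = j₀ then x₁ else if j = i then (1:ℤ) else 1) ∈ affLat q v :=
      heq ▸ mem₁
    have mem₂' : (fun j => if j = j₀ then x₂ else if j = i then (3:ℤ) else 1) ∈ affLat q v :=
      heq ▸ mem₂
    have Hu1 := mem₁.2
    have Hu2 := mem₂.2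
    have Hv1 := mem₁'.2
    have Hv2 := mem₂'.2
    simp only at Hu1 Hu2 Hv1 Hv2
    rw [hsum u i hi x₁ 1] at Hu1
    rw [hsum u i hi x₂ 3] at Hu2
    rw [hsum v i hi x₁ 1] at Hv1
    rw [hsum v i hi x₂ 3] at Hv2
    rw [aux_dvd_iff] at Hu1 Hu2 Hv1 Hv2 ⊢
    push_cast at Hu1 Hu2 Hv1 Hv2 ⊢
    obtain ⟨k, hkq⟩ := hqodd
    have Hk : (2 : ZMod q) * ((k:ℕ) + 1) = 1 := by
      have h0 : ((q:ℕ) : ZMod q) = 0 := ZMod.natCast_self q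
      have : ((2 * k + 1 : ℕ) : ZMod q) = 0 := by rw [← hkq]; exact h0
      push_cast at this
      linear_combination this
    have Hw : (w : ZMod q) * (u j₀ : ZMod q) = 1 := by
      have : ((w * u j₀ + z * q : ℤ) : ZMod q) = 1 := by rw [hw]; norm_num
      push_cast at this
      simpa [ZMod.natCast_self] using this
    linear_combination ((k : ZMod q) + 1) *
        ((Hv1 - Hv2) - ((v j₀ : ZMod q) * (w : ZMod q)) * (Hu1 - Hu2)
          + ((v j₀ : ZMod q) * ((x₁ : ZMod q) - (x₂ : ZMod q))) * Hw)
      + ((v i : ZMod q) - (v j₀ : ZMod q) * (w : ZMod q) * (u i : ZMod q)) * Hk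
  · rintro ⟨ℓ, hℓ, hl⟩
    obtain ⟨c, d, hcd⟩ := hℓ
    refine Set.Subset.antisymm (aux_subset q m u v ℓ hl) (aux_subset q m v u c ?_)
    intro i
    obtain ⟨e, he⟩ := hl i
    exact ⟨-(d * u i) - c * e, by linear_combination (-c) * he + u i * hcd⟩

theorem affLat_image_signedPerm_iff (q m : ℕ) (hq : 0 < q) (hqodd : Odd q) (hm : 2 ≤ m)
    (s s' : Fin m → ℤ) (hs : ∀ j, IsCoprime (s j) (q : ℤ))
    (hs' : ∀ j, IsCoprime (s' j) (q : ℤ))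
    (σ : Equiv.Perm (Fin m)) (ε : Fin m → ℤ) (hε : ∀ j, ε j = 1 ∨ ε j = -1) :
    signedPerm σ ε '' affLat q s = affLat q s' ↔
      ∃ ℓ : ℤ, IsCoprime ℓ (q : ℤ) ∧
        ∀ j, (q : ℤ) ∣ ℓ * ε j * s j - s' (σ j) := by
  have hε2 : ∀ j, ε j * ε j = 1 := by
    intro j; rcases hε j with h | h <;> rw [h] <;> norm_num
  set u : Fin m → ℤ := fun i => ε (σ.symm i) * s (σ.symm i) with hu
  have himg : signedPerm σ ε '' affLat q s = affLat q u := by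
    ext b
    constructor
    · rintro ⟨a, ⟨haodd, hadvd⟩, rfl⟩
      constructor
      · intro j
        rcases hε (σ.symm j) with h | h
        · simpa [signedPerm, h] using haodd (σ.symm j)
        · simpa [signedPerm, h] using (haodd (σ.symm j)).neg
      · have : ∑ j, signedPerm σ ε a j * u j = ∑ j, a j * s j := by
          refine (Fintype.sum_equiv σ (fun j => a j * s j)
            (fun i => signedPerm σ ε a i * u i) fun x => ?_).symm
          simp only [signedPerm, hu, Equiv.symm_apply_apply]
          linear_combination (-(a x * s x)) * hε2 x
        rw [this]; exact hadvd
    · rintro ⟨hbodd, hbdvd⟩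
      refine ⟨fun j => ε j * b (σ j), ⟨?_, ?_⟩, ?_⟩
      · intro j
        rcases hε j with h | h
        · simpa [h] using hbodd (σ j)
        · simpa [h] using (hbodd (σ j)).neg
      · have : ∑ j, (ε j * b (σ j)) * s j = ∑ j, b j * u j := by
          refine Fintype.sum_equiv σ _ _ fun x => ?_
          simp only [hu, Equiv.symm_apply_apply]
          ring
        rw [this]; exact hbdvd
      · funext i
        simp only [signedPerm, Equiv.apply_symm_apply]
        rw [← mul_assoc, hε2 (σ.symm i), one_mul]
  rw [himg, aux_key q m hq hqodd (by omega) u s' (fun i => by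
      rcases hε (σ.symm i) with h | h <;>
        simp only [hu, h, one_mul, neg_one_mul, IsCoprime.neg_left_iff] <;>
        exact hs (σ.symm i)) hs']
  constructor
  · rintro ⟨ℓ, hℓ, hl⟩
    refine ⟨ℓ, hℓ, fun j => ?_⟩
    have := hl (σ j)
    simp only [hu, Equiv.symm_apply_apply] at this
    convert this using 1
    ring
  · rintro ⟨ℓ, hℓ, hl⟩
    refine ⟨ℓ, hℓ, fun i => ?_⟩
    have := hl (σ.symm i)
    rw [Equiv.apply_symm_apply] at this
    convert this using 1
    simp only [hu]
    ring
end

section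
/- Let q be a positive even integer, let m be a positive even integer, and let s, s' ∈ ℤ^m have all coordinates coprime to q. Let σ be a permutation of {1,…,m}, let ε_1,…,ε_m ∈ {±1}, let ρ ∈ {0,1}, and let φ be the associated signed-permutation map. Then φ(𝓛(q;s;h)) = 𝓛(q;s';h+ρ) holds for both h = 0 and h = 1 if and only if there exists an integer ℓ coprime to q such that ℓ·ε_j·s_j ≡ s'_{σ(j)} (mod q) for all j and ρ ≡ Σ_{j=1}^m (ℓ·ε_j·s_j − s'_{σ(j)})/q (mod 2). -/
/-- The affine congruence lattice `𝓛(q;s;h)`, encoded by numerator vectors: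
`½(a_1,…,a_m) ∈ 𝓛(q;s;h)` iff all `a_j` are odd and `∑_j a_j s_j ≡ hq (mod 2q)`. -/
def affLatH (q : ℕ) {m : ℕ} (s : Fin m → ℤ) (h : ℤ) : Set (Fin m → ℤ) :=
  {a | (∀ j, Odd (a j)) ∧ (2 * q : ℤ) ∣ (∑ j, a j * s j) - h * q}

private lemma odd_of_coprime_even {x : ℤ} {q : ℕ} (hqe : Even q) (h : IsCoprime x (q : ℤ)) :
    Odd x := by
  obtain ⟨u, v, huv⟩ := h
  rcases Int.even_or_odd x with he | ho
  · exfalso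
    obtain ⟨y, hy⟩ := he
    obtain ⟨k, hk⟩ := hqe
    have hq2 : (q : ℤ) = k + k := by exact_mod_cast hk
    have : (2 : ℤ) ∣ 1 := ⟨u * y + v * k, by rw [← huv, hy, hq2]; ring⟩
    norm_num at this
  · exact ho

private lemma sum_sp {m : ℕ} (σ : Equiv.Perm (Fin m)) (ε a s' : Fin m → ℤ) :
    ∑ i, signedPerm σ ε a i * s' i = ∑ j, ε j * a j * s' (σ j) := by
  rw [← Equiv.sum_comp σ (fun i => signedPerm σ ε a i * s' i)]
  simp [signedPerm]

private lemma sum_t_eq {m : ℕ} (q : ℕ) (σ : Equiv.Perm (Fin m)) (ε s s' a ρv : Fin m → ℤ)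
    (hε : ∀ j, ε j = 1 ∨ ε j = -1) (ℓ : ℤ)
    (hrel : ∀ j, ℓ * ε j * s j - s' (σ j) = (q : ℤ) * ρv j) :
    ∑ j, ε j * a j * s' (σ j) =
      ℓ * ∑ j, a j * s j - (q : ℤ) * ∑ j, ε j * a j * ρv j := by
  rw [Finset.mul_sum, Finset.mul_sum, ← Finset.sum_sub_distrib]
  refine Finset.sum_congr rfl fun j _ => ?_
  have h2 : ε j * ε j = 1 := by rcases hε j with h | h <;> rw [h] <;> ring
  have h1 : s' (σ j) = ℓ * ε j * s j - (q : ℤ) * ρv j := by linarith [hrel j]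
  calc ε j * a j * s' (σ j)
      = ℓ * (a j * s j) * (ε j * ε j) - (q : ℤ) * (ε j * a j * ρv j) := by rw [h1]; ring
    _ = _ := by rw [h2]; ring

private lemma sum_parity {m : ℕ} (ε a ρv : Fin m → ℤ)
    (hε : ∀ j, ε j = 1 ∨ ε j = -1) (ha : ∀ j, Odd (a j)) :
    (2 : ℤ) ∣ (∑ j, ε j * a j * ρv j) - ∑ j, ρv j := by
  rw [← Finset.sum_sub_distrib]
  refine Finset.dvd_sum fun j _ => ?_
  obtain ⟨k, hk⟩ := ha j
  rcases hε j with h | h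
  · exact ⟨k * ρv j, by rw [h, hk]; ring⟩
  · exact ⟨(-k - 1) * ρv j, by rw [h, hk]; ring⟩

private lemma sum_pert {m : ℕ} (j0 k : Fin m) (a f : Fin m → ℤ) (c d : ℤ) :
    ∑ i, (a i + (if i = k then c else 0) + (if i = j0 then d else 0)) * f i
      = (∑ i, a i * f i) + c * f k + d * f j0 := by
  have h : ∀ i, (a i + (if i = k then c else 0) + (if i = j0 then d else 0)) * f i
      = a i * f i + (if i = k then c * f i else 0) + (if i = j0 then d * f i else 0) := by
    intro i; split_ifs <;> ring
  rw [Finset.sum_congr rfl fun i _ => h i, Finset.sum_add_distrib, Finset.sum_add_distrib,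
      Finset.sum_ite_eq' Finset.univ k, Finset.sum_ite_eq' Finset.univ j0]
  simp

theorem affLatH_image_signedPerm_iff (q m : ℕ) (hq : 0 < q) (hqeven : Even q)
    (hm : 0 < m) (hmeven : Even m)
    (s s' : Fin m → ℤ) (hs : ∀ j, IsCoprime (s j) (q : ℤ))
    (hs' : ∀ j, IsCoprime (s' j) (q : ℤ))
    (σ : Equiv.Perm (Fin m)) (ε : Fin m → ℤ) (hε : ∀ j, ε j = 1 ∨ ε j = -1)
    (ρ : ℤ) (hρ : ρ = 0 ∨ ρ = 1) :
    (∀ h : ℤ, h = 0 ∨ h = 1 →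
        signedPerm σ ε '' affLatH q s h = affLatH q s' (h + ρ)) ↔
      ∃ ℓ : ℤ, IsCoprime ℓ (q : ℤ) ∧ ∃ ρv : Fin m → ℤ,
        (∀ j, ℓ * ε j * s j - s' (σ j) = (q : ℤ) * ρv j) ∧
        ρ ≡ ∑ j, ρv j [ZMOD 2] := by
  have hqZ : (0 : ℤ) < (q : ℤ) := by exact_mod_cast hq
  have hεodd : ∀ j, Odd (ε j) := by
    intro j; rcases hε j with h | h <;> rw [h]
    · exact ⟨0, by ring⟩
    · exact ⟨-1, by ring⟩
  have hε2 : ∀ j, ε j * ε j = 1 := by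
    intro j; rcases hε j with h | h <;> rw [h] <;> ring
  constructor
  · -- forward direction
    intro H
    set j0 : Fin m := ⟨0, hm⟩ with hj0
    obtain ⟨u, v, huv⟩ := hs j0
    -- sum of s is even
    have hsodd : ∀ j, Odd (s j) := fun j => odd_of_coprime_even hqeven (hs j)
    have hS : (2 : ℤ) ∣ ∑ j, s j := by
      have h1 : (∑ j, s j) - (m : ℤ) = ∑ j, (s j - 1) := by
        rw [Finset.sum_sub_distrib]; simp
      have h2 : (2 : ℤ) ∣ ∑ j, (s j - 1) := by
        refine Finset.dvd_sum fun j _ => ?_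
        obtain ⟨k, hk⟩ := hsodd j
        exact ⟨k, by rw [hk]; ring⟩
      have h3 : (2 : ℤ) ∣ (m : ℤ) := by
        obtain ⟨k, hk⟩ := hmeven
        exact ⟨(k : ℤ), by rw [hk]; push_cast; ring⟩
      omega
    obtain ⟨S2, hS2⟩ := hS
    -- the base vector a0
    set c : ℤ := -S2 * u with hc
    set a0 : Fin m → ℤ :=
      fun i => 1 + (if i = j0 then 2 * c else 0) + (if i = j0 then 0 else 0) with ha0
    have ha0odd : ∀ j, Odd (a0 j) := by
      intro j
      refine ⟨if j = j0 then c else 0, ?_⟩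
      simp only [ha0]
      split_ifs <;> ring
    have ha0sum : ∀ f : Fin m → ℤ, ∑ i, a0 i * f i = (∑ i, f i) + 2 * c * f j0 := by
      intro f
      have h : ∀ i, a0 i * f i = f i + (if i = j0 then 2 * c * f i else 0) := by
        intro i; simp only [ha0]; split_ifs <;> ring
      rw [Finset.sum_congr rfl fun i _ => h i, Finset.sum_add_distrib,
        Finset.sum_ite_eq' Finset.univ j0]
      simp
    have ha0L : (2 * (q : ℤ)) ∣ (∑ j, a0 j * s j) - 0 * q := by
      refine ⟨S2 * v, ?_⟩
      rw [ha0sum s, hS2, hc]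
      linear_combination (-2 * S2) * huv
    have ha0mem : a0 ∈ affLatH q s 0 := ⟨ha0odd, ha0L⟩
    -- generic consequence of the image equality at h = 0
    have himg : ∀ a : Fin m → ℤ, a ∈ affLatH q s 0 →
        (2 * (q : ℤ)) ∣ (∑ j, ε j * a j * s' (σ j)) - ρ * q := by
      intro a ha
      have hmem : signedPerm σ ε a ∈ affLatH q s' (0 + ρ) := by
        rw [← H 0 (Or.inl rfl)]; exact ⟨a, ha, rfl⟩
      have h2 := hmem.2
      rw [sum_sp] at h2
      have : (0 + ρ) * (q : ℤ) = ρ * q := by ring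
      rwa [this] at h2
    have ht0 := himg a0 ha0mem
    -- perturbed vectors and the key divisibility
    have hkey : ∀ k, (q : ℤ) ∣ s j0 * (ε k * s' (σ k)) - s k * (ε j0 * s' (σ j0)) := by
      intro k
      set b : Fin m → ℤ :=
        fun i => a0 i + (if i = k then 2 * s j0 else 0) + (if i = j0 then -(2 * s k) else 0)
        with hb
      have hbodd : ∀ j, Odd (b j) := by
        intro j
        obtain ⟨w, hw⟩ := ha0odd j
        simp only [hb]
        split_ifs with h1 h2 h2
        · exact ⟨w + s j0 - s k, by rw [hw]; ring⟩
        · exact ⟨w + s j0, by rw [hw]; ring⟩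
        · exact ⟨w - s k, by rw [hw]; ring⟩
        · exact ⟨w, by rw [hw]; ring⟩
      have hbsum : ∀ f : Fin m → ℤ, ∑ i, b i * f i
          = (∑ i, a0 i * f i) + 2 * s j0 * f k - 2 * s k * f j0 := by
        intro f
        have h := sum_pert j0 k a0 f (2 * s j0) (-(2 * s k))
        simp only [hb]
        rw [h]; ring
      have hbL : b ∈ affLatH q s 0 := by
        refine ⟨hbodd, ?_⟩
        rw [hbsum s]
        obtain ⟨w, hw⟩ := ha0L
        exact ⟨w, by linear_combination hw⟩
      have htb := himg b hbL
      -- rewrite sum over b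
      have hsb : ∑ j, ε j * b j * s' (σ j) = ∑ j, b j * (ε j * s' (σ j)) :=
        Finset.sum_congr rfl fun j _ => by ring
      have hsa : ∑ j, ε j * a0 j * s' (σ j) = ∑ j, a0 j * (ε j * s' (σ j)) :=
        Finset.sum_congr rfl fun j _ => by ring
      rw [hsb, hbsum (fun j => ε j * s' (σ j))] at htb
      rw [hsa] at ht0
      obtain ⟨w1, hw1⟩ := htb
      obtain ⟨w2, hw2⟩ := ht0
      refine ⟨w1 - w2, ?_⟩
      have h2 : (2 : ℤ) * (s j0 * (ε k * s' (σ k)) - s k * (ε j0 * s' (σ j0)))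
          = 2 * ((q : ℤ) * (w1 - w2)) := by linear_combination hw1 - hw2
      have := mul_left_cancel₀ (two_ne_zero) h2
      linarith [this]
    -- define ℓ
    set ℓ : ℤ := ε j0 * s' (σ j0) * u with hℓ
    have hdvd : ∀ j, (q : ℤ) ∣ ℓ * ε j * s j - s' (σ j) := by
      intro j
      obtain ⟨w, hw⟩ := hkey j
      refine ⟨-(ε j * (u * w + v * (ε j * s' (σ j)))), ?_⟩
      rw [hℓ]
      linear_combination (-u * ε j) * hw + (ε j * ε j * s' (σ j)) * huv
        + (s' (σ j)) * (hε2 j)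
    have hℓcop : IsCoprime ℓ (q : ℤ) := by
      rw [hℓ]
      refine IsCoprime.mul_left (IsCoprime.mul_left ?_ (hs' (σ j0))) ⟨s j0, v, by linarith⟩
      rcases hε j0 with h | h <;> rw [h]
      · exact isCoprime_one_left
      · exact isCoprime_one_left.neg_left
    refine ⟨ℓ, hℓcop, fun j => (ℓ * ε j * s j - s' (σ j)) / (q : ℤ), fun j =>
      (Int.mul_ediv_cancel' (hdvd j)).symm, ?_⟩
    set ρv : Fin m → ℤ := fun j => (ℓ * ε j * s j - s' (σ j)) / (q : ℤ) with hρv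
    have hrel : ∀ j, ℓ * ε j * s j - s' (σ j) = (q : ℤ) * ρv j := fun j =>
      (Int.mul_ediv_cancel' (hdvd j)).symm
    -- parity
    have ha0t := himg a0 ha0mem
    rw [sum_t_eq q σ ε s s' a0 ρv hε ℓ hrel] at ha0t
    obtain ⟨w1, hw1⟩ := ha0t
    obtain ⟨w2, hw2⟩ := ha0L
    obtain ⟨w3, hw3⟩ := sum_parity ε a0 ρv hε ha0odd
    -- ℓ * (∑ a0 s) - q * X - ρ q = 2 q w1, ∑ a0 s = 2 q w2, X - P = 2 w3
    rw [Int.modEq_iff_dvd]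
    have hqne : (q : ℤ) ≠ 0 := ne_of_gt hqZ
    have hkey2 : (q : ℤ) * (ρ + ∑ j, ε j * a0 j * ρv j) = (q : ℤ) * (2 * (ℓ * w2 - w1)) := by
      linear_combination ℓ * hw2 - hw1
    have h4 := mul_left_cancel₀ hqne hkey2
    refine ⟨ℓ * w2 - w1 - w3 - ρ, ?_⟩
    linear_combination h4 - hw3
  · -- backward direction
    rintro ⟨ℓ, hℓcop, ρv, hrel, hpar⟩ h _
    have hℓodd : Odd ℓ := odd_of_coprime_even hqeven hℓcop
    obtain ⟨k2, hk2⟩ := hℓodd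
    have hpar' : (2 : ℤ) ∣ (∑ j, ρv j) - ρ := hpar.dvd
    obtain ⟨w4, hw4⟩ := hpar'
    ext b
    constructor
    · rintro ⟨a, ⟨haodd, hasum⟩, rfl⟩
      refine ⟨fun i => (hεodd _).mul (haodd _), ?_⟩
      rw [sum_sp, sum_t_eq q σ ε s s' a ρv hε ℓ hrel]
      obtain ⟨w1, hw1⟩ := hasum
      obtain ⟨w3, hw3⟩ := sum_parity ε a ρv hε haodd
      refine ⟨ℓ * w1 + k2 * h - w3 - w4 - ρ, ?_⟩
      linear_combination ℓ * hw1 + h * (q : ℤ) * hk2 - (q : ℤ) * hw3 - (q : ℤ) * hw4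
    · rintro ⟨hbodd, hbsum⟩
      refine ⟨fun j => ε j * b (σ j), ⟨fun j => (hεodd j).mul (hbodd (σ j)), ?_⟩, ?_⟩
      · -- membership
        have hE : ∑ i, b i * s' i = ∑ j, ε j * (ε j * b (σ j)) * s' (σ j) := by
          rw [← Equiv.sum_comp σ (fun i => b i * s' i)]
          refine Finset.sum_congr rfl fun j _ => ?_
          linear_combination (b (σ j) * s' (σ j)) * (hε2 j).symm
        rw [hE, sum_t_eq q σ ε s s' (fun j => ε j * b (σ j)) ρv hε ℓ hrel] at hbsum
        obtain ⟨w1, hw1⟩ := hbsum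
        obtain ⟨w3, hw3⟩ := sum_parity ε (fun j => ε j * b (σ j)) ρv hε
          (fun j => (hεodd j).mul (hbodd (σ j)))
        have hc2 : IsCoprime (2 * (q : ℤ)) ℓ :=
          IsCoprime.mul_left ⟨-k2, 1, by linarith⟩ hℓcop.symm
        refine hc2.dvd_of_dvd_mul_left ⟨w1 + w3 + w4 + ρ - k2 * h, ?_⟩
        linear_combination hw1 + (q : ℤ) * hw3 + (q : ℤ) * hw4 - h * (q : ℤ) * hk2
      · funext i
        show ε (σ.symm i) * (ε (σ.symm i) * b (σ (σ.symm i))) = b i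
        rw [σ.apply_symm_apply]
        linear_combination (b i) * (hε2 (σ.symm i))
end

section
/- Let q be a positive integer, let m be a positive odd integer, and let s ∈ ℤ^m have all coordinates coprime to q. Then for the affine congruence lattice 𝓛 = 𝓛(q;s) one has N_𝓛(0,k) = N_𝓛(1,k) for every integer k ≥ 0. -/
/-- `R(μ)`: the number of negative entries of `μ = ½(a_1,…,a_m)`. -/
def negCount {m : ℕ} (a : Fin m → ℤ) : ℕ :=
  (Finset.univ.filter fun j => a j < 0).card

/-- `N_𝓛(ε,k)`: the number of `μ = ½(a_1,…,a_m) ∈ 𝓛` with one-norm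
`‖μ‖₁ = ½∑|a_j| = k + m/2` (i.e. `∑|a_j| = 2k + m`) and `R(μ) ≡ ε (mod 2)`. -/
noncomputable def Ncount {m : ℕ} (L : Set (Fin m → ℤ)) (ε k : ℕ) : ℕ :=
  Set.ncard {a | a ∈ L ∧ (∑ j, |a j|) = 2 * (k : ℤ) + m ∧ negCount a % 2 = ε}

lemma negCount_le {m : ℕ} (a : Fin m → ℤ) : negCount a ≤ m := by
  simpa [negCount] using (Finset.card_filter_le Finset.univ fun j => a j < 0)

lemma negCount_neg {m : ℕ} (a : Fin m → ℤ) (h : ∀ j, Odd (a j)) :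
    negCount (-a) = m - negCount a := by
  unfold negCount
  have hc : (Finset.univ.filter fun j => (-a) j < 0)
      = (Finset.univ.filter fun j => a j < 0)ᶜ := by
    ext j
    have hj := Int.odd_iff.mp (h j)
    simp only [Finset.mem_filter, Finset.mem_compl, Finset.mem_univ, true_and, Pi.neg_apply]
    omega
  rw [hc, Finset.card_compl]; simp

lemma mem_neg_iff (q : ℕ) {m : ℕ} (s : Fin m → ℤ) (a : Fin m → ℤ) :
    (-a) ∈ affLat q s ↔ a ∈ affLat q s := by
  simp only [affLat, Set.mem_setOf_eq, Pi.neg_apply]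
  constructor
  · rintro ⟨h1, h2⟩
    refine ⟨fun j => by simpa using (h1 j).neg, ?_⟩
    have : ∑ j, -a j * s j = -∑ j, a j * s j := by
      rw [← Finset.sum_neg_distrib]; ring_nf
    rw [this] at h2
    exact (dvd_neg).mp h2
  · rintro ⟨h1, h2⟩
    refine ⟨fun j => (h1 j).neg, ?_⟩
    have : ∑ j, -a j * s j = -∑ j, a j * s j := by
      rw [← Finset.sum_neg_distrib]; ring_nf
    rw [this]
    exact dvd_neg.mpr h2

theorem Ncount_zero_eq_one_of_odd_m (q m : ℕ) (hq : 0 < q) (hm : 0 < m) (hmodd : Odd m)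
    (s : Fin m → ℤ) (hs : ∀ j, IsCoprime (s j) (q : ℤ)) (k : ℕ) :
    Ncount (affLat q s) 0 k = Ncount (affLat q s) 1 k := by
  have hmo := Nat.odd_iff.mp hmodd
  have key : {a | a ∈ affLat q s ∧ (∑ j, |a j|) = 2 * (k : ℤ) + m ∧ negCount a % 2 = 1}
      = (fun a : Fin m → ℤ => -a) ''
        {a | a ∈ affLat q s ∧ (∑ j, |a j|) = 2 * (k : ℤ) + m ∧ negCount a % 2 = 0} := by
    ext a
    simp only [Set.mem_image, Set.mem_setOf_eq]
    constructor
    · rintro ⟨h1, h2, h3⟩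
      refine ⟨-a, ⟨(mem_neg_iff q s a).mpr h1, ?_, ?_⟩, by simp⟩
      · simpa [abs_neg] using h2
      · have hle := negCount_le a
        have := negCount_neg a h1.1
        omega
    · rintro ⟨b, ⟨h1, h2, h3⟩, rfl⟩
      refine ⟨(mem_neg_iff q s b).mpr h1, by simpa [abs_neg] using h2, ?_⟩
      have hle := negCount_le b
      have := negCount_neg b h1.1
      omega
  unfold Ncount
  rw [key, Set.ncard_image_of_injective _ neg_injective]
end

section
/- For every integer m ≥ 2 and every even integer r ≥ 2, the binomial identity C(r+m−2, m−2) + C(r−1+m−2, m−2) = Σ_{l=0}^{r/2} C(m, 2l) · C(r/2 − l + m − 2, m−2) holds, where C(n,k) denotes the binomial coefficient. -/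
/-!
Writing `m = d + 2` and `r = 2s + 2`, both sides are the coefficient of `X ^ r` in
`(1 + X) / (1 - X) ^ (d + 1) = (1 + X) ^ (d + 2) / (1 - X ^ 2) ^ (d + 1)`, using
`1 / (1 - X) ^ (d + 1) = ∑ₙ C(d + n, d) Xⁿ` on the left and its image under `X ↦ X ^ 2`
on the right.
-/

open Finset PowerSeries

namespace PowerSeries

variable {R : Type*} [CommRing R]

theorem coeff_mul_expand (p : ℕ) (hp : p ≠ 0) (f g : R⟦X⟧) (n : ℕ) :
    coeff (p * n) (f * expand p hp g) =
      ∑ ij ∈ antidiagonal n, coeff (p * ij.1) f * coeff ij.2 g := by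
  set scale : ℕ × ℕ → ℕ × ℕ := fun ij ↦ (p * ij.1, p * ij.2)
  have h_image : ∑ ij ∈ antidiagonal n, coeff (p * ij.1) f * coeff ij.2 g =
      ∑ ij ∈ (antidiagonal n).image scale, coeff ij.1 f * coeff ij.2 (expand p hp g) := by
    rw [sum_image fun a _ b _ h ↦ by simpa [scale, Prod.ext_iff, hp] using h]
    simp [scale]
  rw [h_image, coeff_mul]
  refine (sum_subset (fun ij hij ↦ ?_) fun ij hij hnot ↦ ?_).symm
  · obtain ⟨a, ha, rfl⟩ := mem_image.mp hij
    rw [HasAntidiagonal.mem_antidiagonal] at ha ⊢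
    simp [scale, ← mul_add, ha]
  · rw [coeff_expand_of_not_dvd p hp, mul_zero]
    rintro ⟨j, hj⟩
    rw [HasAntidiagonal.mem_antidiagonal] at hij
    refine hnot (mem_image.mpr ⟨(n - j, j), ?_, ?_⟩)
    · have hjn : j ≤ n := le_of_mul_le_mul_left (hj ▸ hij ▸ le_add_self) (Nat.pos_of_ne_zero hp)
      rw [HasAntidiagonal.mem_antidiagonal, Nat.sub_add_cancel hjn]
    · simp only [scale, Nat.mul_sub, ← hj, ← hij, Nat.add_sub_cancel]

theorem coeff_one_add_X_pow (n k : ℕ) : coeff k ((1 + X : R⟦X⟧) ^ n) = n.choose k := by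
  rw [← Polynomial.coeff_one_add_X_pow R n k, ← Polynomial.coeff_coe]
  simp

theorem one_add_X_mul_eq_of_mul_one_sub_X_pow_eq_one {G : R⟦X⟧} {k : ℕ}
    (hG : G * (1 - X) ^ k = 1) :
    (1 + X) * G = (1 + X) ^ (k + 1) * expand 2 two_ne_zero G := by
  have hG₂ : expand 2 two_ne_zero G * ((1 - X) ^ k * (1 + X) ^ k) = 1 := by
    have h := congrArg (expand 2 two_ne_zero) hG
    simp only [map_mul, map_pow, map_sub, map_one, expand_X] at h
    rwa [← mul_pow, mul_comm (1 - X), ← sq_sub_sq, one_pow]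
  calc (1 + X) * G = (1 + X) * G * (expand 2 two_ne_zero G * ((1 - X) ^ k * (1 + X) ^ k)) := by
        rw [hG₂, mul_one]
    _ = (1 + X) ^ (k + 1) * expand 2 two_ne_zero G * (G * (1 - X) ^ k) := by ring
    _ = _ := by rw [hG, mul_one]

end PowerSeries

theorem add_choose_add_add_choose_eq_sum (d s : ℕ) :
    (d + (2 * s + 2)).choose d + (d + (2 * s + 1)).choose d =
      ∑ l ∈ range (s + 2), (d + 2).choose (2 * l) * (d + (s + 1 - l)).choose d := by
  have h_key := congrArg (coeff (2 * (s + 1)))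
    (one_add_X_mul_eq_of_mul_one_sub_X_pow_eq_one (mk_add_choose_mul_one_sub_pow_eq_one ℤ d))
  rw [coeff_mul_expand, Nat.sum_antidiagonal_eq_sum_range_succ_mk, add_mul, one_mul,
    map_add, show 2 * (s + 1) = 2 * s + 1 + 1 by ring, coeff_succ_X_mul] at h_key
  simp only [coeff_mk, coeff_one_add_X_pow] at h_key
  exact_mod_cast h_key

theorem choose_add_choose_eq_sum_even_part (m r : ℕ) (hm : 2 ≤ m) (hr : 2 ≤ r)
    (hre : Even r) :
    Nat.choose (r + m - 2) (m - 2) + Nat.choose (r - 1 + m - 2) (m - 2) =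
      ∑ l ∈ Finset.range (r / 2 + 1),
        Nat.choose m (2 * l) * Nat.choose (r / 2 - l + m - 2) (m - 2) := by
  obtain ⟨d, rfl⟩ : ∃ d, m = d + 2 := ⟨m - 2, by omega⟩
  obtain ⟨s, rfl⟩ : ∃ s, r = 2 * s + 2 := ⟨r / 2 - 1, by grind⟩
  have hs : (2 * s + 2) / 2 = s + 1 := by omega
  rw [hs, show 2 * s + 2 + (d + 2) - 2 = d + (2 * s + 2) by omega,
    show 2 * s + 2 - 1 + (d + 2) - 2 = d + (2 * s + 1) by omega, Nat.add_sub_cancel,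
    add_choose_add_add_choose_eq_sum]
  refine sum_congr rfl fun l _ ↦ ?_
  rw [show s + 1 - l + (d + 2) - 2 = d + (s + 1 - l) by omega]
end

section
/- Let r ≥ 1 be an integer, set m = 4r+2 and q = 40, and for each integer 0 ≤ p ≤ r let s^{(p)} ∈ ℤ^m be the tuple whose first m−2p coordinates are 1,11,1,11,…,1,11 (alternating) and whose last 2p coordinates are 21,31,…,21,31 (alternating). Then for all 0 ≤ p, p' ≤ r, the affine congruence lattices 𝓛(40; s^{(p)}; 0) and 𝓛(40; s^{(p')}; 0) are oriented ‖·‖₁-isospectral, i.e. N_{𝓛(40;s^{(p)};0)}(ε,k) = N_{𝓛(40;s^{(p')};0)}(ε,k) for all integers k ≥ 0 and ε ∈ {0,1}. -/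
/-- The parameter tuple `s^{(p)} ∈ ℤ^m`, `m = 4r+2`: its first `m - 2p` coordinates are
`1,11,1,11,…,1,11` (alternating) and its last `2p` coordinates are `21,31,…,21,31`
(alternating); coordinates are indexed from `0`, so even positions get `1` (resp. `21`)
and odd positions get `11` (resp. `31`). -/
def sFam (r p : ℕ) : Fin (4 * r + 2) → ℤ :=
  fun j =>
    if (j : ℕ) < 4 * r + 2 - 2 * p then (if (j : ℕ) % 2 = 0 then 1 else 11)
    else (if (j : ℕ) % 2 = 0 then 21 else 31)

namespace SFamIso

/-- Partner index: `2i ↔ 2i+1`. -/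
def wIdx (r : ℕ) (j : Fin (4 * r + 2)) : Fin (4 * r + 2) :=
  ⟨if (j : ℕ) % 2 = 0 then (j : ℕ) + 1 else (j : ℕ) - 1, by
    rcases j with ⟨v, hv⟩; dsimp only; split <;> omega⟩

lemma wIdx_invol (r : ℕ) (j : Fin (4 * r + 2)) : wIdx r (wIdx r j) = j := by
  rcases j with ⟨v, hv⟩
  apply Fin.ext
  simp only [wIdx]
  split_ifs <;> omega

/-- Swap each adjacent pair of coordinates. -/
def Wm (r : ℕ) (a : Fin (4 * r + 2) → ℤ) : Fin (4 * r + 2) → ℤ := fun j => a (wIdx r j)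

lemma Wm_invol (r : ℕ) (a : Fin (4 * r + 2) → ℤ) : Wm r (Wm r a) = a := by
  funext j
  show a (wIdx r (wIdx r j)) = a j
  rw [wIdx_invol]

/-- Extension of `a` to `ℕ`, with odd dummy value `1`. -/
def ext (r : ℕ) (a : Fin (4 * r + 2) → ℤ) (t : ℕ) : ℤ :=
  if h : t < 4 * r + 2 then a ⟨t, h⟩ else 1

lemma ext_odd (r : ℕ) (a : Fin (4 * r + 2) → ℤ) (ha : ∀ j, Odd (a j)) (t : ℕ) :
    Odd (ext r a t) := by
  unfold ext; split
  · exact ha _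
  · exact odd_one

lemma ext_Wm_even (r : ℕ) (a : Fin (4 * r + 2) → ℤ) (i : ℕ) (hi : 2 * i + 1 < 4 * r + 2) :
    ext r (Wm r a) (2 * i) = ext r a (2 * i + 1) := by
  unfold ext Wm
  rw [dif_pos (by omega : 2 * i < 4 * r + 2), dif_pos hi]
  congr 1
  apply Fin.ext
  simp only [wIdx]
  split_ifs <;> omega

lemma ext_Wm_odd (r : ℕ) (a : Fin (4 * r + 2) → ℤ) (i : ℕ) (hi : 2 * i + 1 < 4 * r + 2) :
    ext r (Wm r a) (2 * i + 1) = ext r a (2 * i) := by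
  unfold ext Wm
  rw [dif_pos hi, dif_pos (by omega : 2 * i < 4 * r + 2)]
  congr 1
  apply Fin.ext
  simp only [wIdx]
  split_ifs <;> omega

lemma sum_pair {M : Type*} [AddCommMonoid M] (g : ℕ → M) :
    ∀ n : ℕ, ∑ t ∈ Finset.range (2 * n), g t = ∑ i ∈ Finset.range n, (g (2 * i) + g (2 * i + 1))
  | 0 => by simp
  | (n + 1) => by
    rw [show 2 * (n + 1) = (2 * n + 1) + 1 from by ring, Finset.sum_range_succ,
      Finset.sum_range_succ, sum_pair g n, Finset.sum_range_succ, add_assoc]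

lemma range_pair (r : ℕ) {M : Type*} [AddCommMonoid M] (g : ℕ → M) :
    ∑ t ∈ Finset.range (4 * r + 2), g t
      = ∑ i ∈ Finset.range (2 * r + 1), (g (2 * i) + g (2 * i + 1)) := by
  rw [show 4 * r + 2 = 2 * (2 * r + 1) from by ring]
  exact sum_pair g _

lemma fin_sum_to_range {M : Type*} [AddCommMonoid M] (r : ℕ) (F : Fin (4 * r + 2) → M)
    (G : ℕ → M) (h : ∀ t (ht : t < 4 * r + 2), G t = F ⟨t, ht⟩) :
    ∑ j, F j = ∑ t ∈ Finset.range (4 * r + 2), G t := by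
  rw [← Fin.sum_univ_eq_sum_range G (4 * r + 2)]
  exact Finset.sum_congr rfl fun j _ => (h j.1 j.2).symm

/-- Pairwise weight offset: `0` on the `(1,11)` pairs and `1` on the `(21,31)` pairs. -/
def cw (r p i : ℕ) : ℤ := if 2 * i < 4 * r + 2 - 2 * p then 0 else 1

lemma sFam_eval_even (r p : ℕ) (j : Fin (4 * r + 2)) (i : ℕ) (h : (j : ℕ) = 2 * i) :
    sFam r p j = 1 + 20 * cw r p i := by
  simp only [sFam, cw, h]
  split_ifs <;> omega

lemma sFam_eval_odd (r p : ℕ) (j : Fin (4 * r + 2)) (i : ℕ) (h : (j : ℕ) = 2 * i + 1) :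
    sFam r p j = 11 + 20 * cw r p i := by
  simp only [sFam, cw, h]
  split_ifs <;> omega

def Es (r : ℕ) (a : Fin (4 * r + 2) → ℤ) : ℤ :=
  ∑ i ∈ Finset.range (2 * r + 1), ext r a (2 * i)

def Os (r : ℕ) (a : Fin (4 * r + 2) → ℤ) : ℤ :=
  ∑ i ∈ Finset.range (2 * r + 1), ext r a (2 * i + 1)

def Rs (r p : ℕ) (a : Fin (4 * r + 2) → ℤ) : ℤ :=
  ∑ i ∈ Finset.range (2 * r + 1), cw r p i * (ext r a (2 * i) + ext r a (2 * i + 1))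

lemma decomp (r p : ℕ) (a : Fin (4 * r + 2) → ℤ) :
    ∑ j, a j * sFam r p j = Es r a + 11 * Os r a + 20 * Rs r p a := by
  have h1 : ∑ j, a j * sFam r p j
      = ∑ t ∈ Finset.range (4 * r + 2),
          (ext r a t * (if ht : t < 4 * r + 2 then sFam r p ⟨t, ht⟩ else 0)) := by
    refine fin_sum_to_range r _ _ (fun t ht => ?_)
    rw [dif_pos ht]
    unfold ext
    rw [dif_pos ht]
  rw [h1, range_pair]
  unfold Es Os Rs
  rw [Finset.mul_sum, Finset.mul_sum, ← Finset.sum_add_distrib, ← Finset.sum_add_distrib]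
  refine Finset.sum_congr rfl fun i hi => ?_
  have hi' : i < 2 * r + 1 := Finset.mem_range.mp hi
  have h2 : 2 * i < 4 * r + 2 := by omega
  have h3 : 2 * i + 1 < 4 * r + 2 := by omega
  rw [dif_pos h2, dif_pos h3, sFam_eval_even r p ⟨2 * i, h2⟩ i rfl,
    sFam_eval_odd r p ⟨2 * i + 1, h3⟩ i rfl]
  ring

lemma Es_Wm (r : ℕ) (a : Fin (4 * r + 2) → ℤ) : Es r (Wm r a) = Os r a := by
  unfold Es Os
  refine Finset.sum_congr rfl fun i hi => ?_
  have hi' : i < 2 * r + 1 := Finset.mem_range.mp hi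
  exact ext_Wm_even r a i (by omega)

lemma Os_Wm (r : ℕ) (a : Fin (4 * r + 2) → ℤ) : Os r (Wm r a) = Es r a := by
  unfold Es Os
  refine Finset.sum_congr rfl fun i hi => ?_
  have hi' : i < 2 * r + 1 := Finset.mem_range.mp hi
  exact ext_Wm_odd r a i (by omega)

lemma Rs_Wm (r p : ℕ) (a : Fin (4 * r + 2) → ℤ) : Rs r p (Wm r a) = Rs r p a := by
  unfold Rs
  refine Finset.sum_congr rfl fun i hi => ?_
  have hi' : i < 2 * r + 1 := Finset.mem_range.mp hi
  rw [ext_Wm_even r a i (by omega), ext_Wm_odd r a i (by omega), add_comm]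

lemma odd_sum (f : ℕ → ℤ) (hf : ∀ i, Odd (f i)) :
    ∀ n : ℕ, Odd (∑ i ∈ Finset.range (2 * n + 1), f i)
  | 0 => by simpa using hf 0
  | (n + 1) => by
    rw [show 2 * (n + 1) + 1 = (2 * n + 1) + 1 + 1 from by ring, Finset.sum_range_succ,
      Finset.sum_range_succ]
    exact ((odd_sum f hf n).add_odd (hf _)).add_odd (hf _)

lemma Os_odd (r : ℕ) (a : Fin (4 * r + 2) → ℤ) (ha : ∀ j, Odd (a j)) : Odd (Os r a) :=
  odd_sum _ (fun i => ext_odd r a ha _) r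

lemma Rs_even (r p : ℕ) (a : Fin (4 * r + 2) → ℤ) (ha : ∀ j, Odd (a j)) :
    (2 : ℤ) ∣ Rs r p a := by
  refine Finset.dvd_sum fun i _ => ?_
  have h : Even (ext r a (2 * i) + ext r a (2 * i + 1)) :=
    (ext_odd r a ha _).add_odd (ext_odd r a ha _)
  obtain ⟨u, hu⟩ := h
  exact ⟨cw r p i * u, by rw [hu]; ring⟩

/-- The bijection between the two lattices. -/
def Fm (r p p' : ℕ) (a : Fin (4 * r + 2) → ℤ) : Fin (4 * r + 2) → ℤ :=
  if (4 : ℤ) ∣ (Rs r p' a - Rs r p a) then a else Wm r a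

lemma Fm_invol (r p p' : ℕ) (a : Fin (4 * r + 2) → ℤ) :
    Fm r p' p (Fm r p p' a) = a := by
  unfold Fm
  by_cases h : (4 : ℤ) ∣ (Rs r p' a - Rs r p a)
  · have h' : (4 : ℤ) ∣ (Rs r p a - Rs r p' a) := by
      rw [show Rs r p a - Rs r p' a = -(Rs r p' a - Rs r p a) from by ring]
      exact dvd_neg.mpr h
    rw [if_pos h, if_pos h']
  · have h' : ¬ (4 : ℤ) ∣ (Rs r p (Wm r a) - Rs r p' (Wm r a)) := by
      rw [Rs_Wm, Rs_Wm]
      intro hc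
      apply h
      rw [show Rs r p' a - Rs r p a = -(Rs r p a - Rs r p' a) from by ring]
      exact dvd_neg.mpr hc
    rw [if_neg h, if_neg h', Wm_invol]

lemma affLatH_iff (r : ℕ) (s : Fin (4 * r + 2) → ℤ) (a : Fin (4 * r + 2) → ℤ) :
    a ∈ affLatH 40 s 0 ↔ (∀ j, Odd (a j)) ∧ (80 : ℤ) ∣ ∑ j, a j * s j := by
  unfold affLatH
  simp only [Set.mem_setOf_eq, zero_mul, sub_zero]
  norm_num

lemma mem_map (r p p' : ℕ) (a : Fin (4 * r + 2) → ℤ)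
    (ha : a ∈ affLatH 40 (sFam r p) 0) : Fm r p p' a ∈ affLatH 40 (sFam r p') 0 := by
  rw [affLatH_iff] at ha
  obtain ⟨hodd, hdvd⟩ := ha
  rw [decomp r p a] at hdvd
  rw [affLatH_iff]
  unfold Fm
  split_ifs with hD
  · refine ⟨hodd, ?_⟩
    obtain ⟨e, he⟩ := hD
    obtain ⟨σ, hσ⟩ := hdvd
    rw [decomp r p' a]
    exact ⟨σ + e, by linarith⟩
  · refine ⟨fun j => hodd (wIdx r j), ?_⟩
    have h2 : (2 : ℤ) ∣ (Rs r p' a - Rs r p a) :=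
      dvd_sub (Rs_even r p' a hodd) (Rs_even r p a hodd)
    obtain ⟨d, hd⟩ := h2
    have hdodd : Odd d := by
      rcases Int.even_or_odd d with he | ho
      · exfalso
        obtain ⟨u, hu⟩ := he
        exact hD ⟨u, by rw [hd, hu]; ring⟩
      · exact ho
    obtain ⟨δ, hδ⟩ := hdodd
    obtain ⟨o, ho⟩ := Os_odd r a hodd
    obtain ⟨ρ, hρ⟩ := Rs_even r p a hodd
    obtain ⟨σ, hσ⟩ := hdvd
    rw [decomp r p' (Wm r a), Es_Wm, Os_Wm, Rs_Wm]
    exact ⟨11 * σ - 3 * o - 5 * ρ + δ - 1, by linarith⟩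

lemma norm_split (r : ℕ) (b : Fin (4 * r + 2) → ℤ) :
    ∑ j, |b j| = ∑ i ∈ Finset.range (2 * r + 1), (|ext r b (2 * i)| + |ext r b (2 * i + 1)|) := by
  have h1 : ∑ j, |b j| = ∑ t ∈ Finset.range (4 * r + 2), |ext r b t| := by
    refine fin_sum_to_range r _ _ (fun t ht => ?_)
    unfold ext
    rw [dif_pos ht]
  rw [h1, range_pair]

lemma norm_Wm (r : ℕ) (a : Fin (4 * r + 2) → ℤ) :
    ∑ j, |Wm r a j| = ∑ j, |a j| := by
  rw [norm_split, norm_split]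
  refine Finset.sum_congr rfl fun i hi => ?_
  have hi' : i < 2 * r + 1 := Finset.mem_range.mp hi
  rw [ext_Wm_even r a i (by omega), ext_Wm_odd r a i (by omega), add_comm]

lemma negCount_split (r : ℕ) (b : Fin (4 * r + 2) → ℤ) :
    negCount b = ∑ i ∈ Finset.range (2 * r + 1),
      ((if ext r b (2 * i) < 0 then 1 else 0) + (if ext r b (2 * i + 1) < 0 then 1 else 0)) := by
  unfold negCount
  rw [Finset.card_filter]
  have h1 : ∑ j : Fin (4 * r + 2), (if b j < 0 then 1 else 0)
      = ∑ t ∈ Finset.range (4 * r + 2), (if ext r b t < 0 then 1 else 0) := by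
    refine fin_sum_to_range r _ _ (fun t ht => ?_)
    unfold ext
    rw [dif_pos ht]
  rw [h1, range_pair]

lemma negCount_Wm (r : ℕ) (a : Fin (4 * r + 2) → ℤ) :
    negCount (Wm r a) = negCount a := by
  rw [negCount_split, negCount_split]
  refine Finset.sum_congr rfl fun i hi => ?_
  have hi' : i < 2 * r + 1 := Finset.mem_range.mp hi
  rw [ext_Wm_even r a i (by omega), ext_Wm_odd r a i (by omega), add_comm]

def fullSet (r p k ε : ℕ) : Set (Fin (4 * r + 2) → ℤ) :=
  {a | a ∈ affLatH 40 (sFam r p) 0 ∧ (∑ j, |a j|) = 2 * (k : ℤ) + (4 * r + 2 : ℕ) ∧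
    negCount a % 2 = ε}

lemma mem_full (r p p' k ε : ℕ) (a : Fin (4 * r + 2) → ℤ) (ha : a ∈ fullSet r p k ε) :
    Fm r p p' a ∈ fullSet r p' k ε := by
  obtain ⟨h1, h2, h3⟩ := ha
  refine ⟨mem_map r p p' a h1, ?_, ?_⟩
  · unfold Fm; split_ifs
    · exact h2
    · rw [norm_Wm]; exact h2
  · unfold Fm; split_ifs
    · exact h3
    · rw [negCount_Wm]; exact h3

lemma Fm_injective (r p p' : ℕ) : Function.Injective (Fm r p p') :=
  Function.LeftInverse.injective (g := Fm r p' p) (fun a => Fm_invol r p p' a)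

lemma ncard_eq (r p p' k ε : ℕ) :
    Set.ncard (fullSet r p k ε) = Set.ncard (fullSet r p' k ε) := by
  have himg : fullSet r p' k ε = Fm r p p' '' fullSet r p k ε := by
    ext b
    constructor
    · intro hb
      exact ⟨Fm r p' p b, mem_full r p' p k ε b hb, Fm_invol r p' p b⟩
    · rintro ⟨a, haa, rfl⟩
      exact mem_full r p p' k ε a haa
  rw [himg, Set.ncard_image_of_injective _ (Fm_injective r p p')]

end SFamIso

theorem sFam_oriented_one_norm_isospectral (r : ℕ) (hr : 1 ≤ r)
    (p p' : ℕ) (hp : p ≤ r) (hp' : p' ≤ r) (k ε : ℕ) (hε : ε = 0 ∨ ε = 1) :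
    Ncount (affLatH 40 (sFam r p) 0) ε k = Ncount (affLatH 40 (sFam r p') 0) ε k := by
  exact SFamIso.ncard_eq r p p' k ε
end

section
/- Let r ≥ 1 be an integer, set m = 4r+2, and for each integer 0 ≤ p ≤ r let s^{(p)} ∈ ℤ^m be the tuple whose first m−2p coordinates are 1,11,1,11,…,1,11 (alternating) and whose last 2p coordinates are 21,31,…,21,31 (alternating). Then for all 0 ≤ p < p' ≤ r there exist no integer ℓ coprime to 40, no permutation σ of {1,…,m}, and no signs ε_1,…,ε_m ∈ {±1} such that ℓ·ε_j·s^{(p)}_j ≡ s^{(p')}_{σ(j)} (mod 40) for every j. -/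
/-!
Reduce modulo 40. The residue 1 occurs `2r+1-p` times in `s^{(p)}`, and the map sends each
occurrence to an entry `±ℓ` of `s^{(p')}`. No two entries of `s^{(p')}` (residues 1, 11, 21, 31)
sum to 0 mod 40, so only one of `ℓ`, `-ℓ` occurs in `s^{(p')}`, and any residue occurs there at
most `2r+1-p'` times. Hence `2r+1-p ≤ 2r+1-p'`, contradicting `p < p'`.
-/

open Finset

lemma Finset.card_le_of_forall_mem_Ico_of_mod_two_eq {s : Finset ℕ} {a b : ℕ}
    (hs : ∀ j ∈ s, a ≤ j ∧ j < b) (hpar : ∀ j ∈ s, ∀ k ∈ s, j % 2 = k % 2) :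
    #s ≤ (b - a + 1) / 2 := by
  calc #s ≤ #(range ((b - a + 1) / 2)) := by
        refine card_le_card_of_injOn (fun j ↦ (j - a) / 2) (fun j hj ↦ ?_) fun j hj k hk hjk ↦ ?_
        · have := hs j hj
          simp only [coe_range, Set.mem_Iio]
          omega
        · have := hs j hj
          have := hs k hk
          have := hpar j hj k hk
          simp only at hjk
          omega
    _ = (b - a + 1) / 2 := card_range _

section SignedPermutation

variable {ι R : Type*} [Fintype ι] [DecidableEq R]

lemma card_filter_eq_le_card_filter_eq_or_eq_neg [Ring R] {f g : ι → R} (σ : Equiv.Perm ι)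
    {ε : ι → R} (u a : R) (hε : ∀ j, ε j = 1 ∨ ε j = -1) (h : ∀ j, g (σ j) = u * ε j * f j) :
    #{j | f j = a} ≤ #{k | g k = u * a ∨ g k = -(u * a)} := by
  refine card_le_card_of_injOn σ (fun j hj ↦ ?_) σ.injective.injOn
  simp only [coe_filter, mem_univ, true_and, Set.mem_ofPred_eq] at hj ⊢
  rcases hε j with hεj | hεj <;> simp [h, hεj, hj]

lemma card_filter_eq_or_eq_neg_le [AddGroup R] {g : ι → R} {N : ℕ}
    (hg : ∀ j k, g j + g k ≠ 0) (hN : ∀ c, #{k | g k = c} ≤ N) (c : R) :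
    #{k | g k = c ∨ g k = -c} ≤ N := by
  by_cases hneg : ∃ k, g k = -c
  · obtain ⟨k, hk⟩ := hneg
    have hc : ∀ j, g j ≠ c := fun j hj ↦ hg j k (by rw [hj, hk, add_neg_cancel])
    simpa [hc] using hN (-c)
  · simp only [not_exists] at hneg
    simpa [hneg] using hN c

end SignedPermutation

lemma mod_two_eq_and_lt_iff_of_sFam_cast_eq {r q : ℕ} {j k : Fin (4 * r + 2)}
    (h : (sFam r q j : ZMod 40) = sFam r q k) :
    (j : ℕ) % 2 = k % 2 ∧ ((j : ℕ) < 4 * r + 2 - 2 * q ↔ (k : ℕ) < 4 * r + 2 - 2 * q) := by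
  unfold sFam at h
  split_ifs at h <;> first | omega | exact absurd h (by decide)

lemma sFam_cast_add_ne_zero (r q : ℕ) (j k : Fin (4 * r + 2)) :
    (sFam r q j : ZMod 40) + sFam r q k ≠ 0 := by
  unfold sFam
  split_ifs <;> decide

lemma card_sFam_cast_eq_le {r q : ℕ} (hq : q ≤ r) (c : ZMod 40) :
    #{j : Fin (4 * r + 2) | (sFam r q j : ZMod 40) = c} ≤ 2 * r + 1 - q := by
  set s := ({j : Fin (4 * r + 2) | (sFam r q j : ZMod 40) = c} : Finset _)
  obtain hs | ⟨j₀, hj₀⟩ := s.eq_empty_or_nonempty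
  · simp [hs]
  have hsame : ∀ j ∈ s, (j : ℕ) % 2 = j₀ % 2 ∧
      ((j : ℕ) < 4 * r + 2 - 2 * q ↔ (j₀ : ℕ) < 4 * r + 2 - 2 * q) := fun j hj ↦
    mod_two_eq_and_lt_iff_of_sFam_cast_eq ((mem_filter.mp hj).2.trans (mem_filter.mp hj₀).2.symm)
  have hpar : ∀ j ∈ s.map Fin.valEmbedding, ∀ k ∈ s.map Fin.valEmbedding, j % 2 = k % 2 := by
    simp only [mem_map, Fin.valEmbedding_apply, forall_exists_index, and_imp,
      forall_apply_eq_imp_iff₂]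
    intro j hj k hk
    rw [(hsame j hj).1, (hsame k hk).1]
  rw [← card_map Fin.valEmbedding]
  by_cases hcut : (j₀ : ℕ) < 4 * r + 2 - 2 * q
  · refine (card_le_of_forall_mem_Ico_of_mod_two_eq (a := 0) (b := 4 * r + 2 - 2 * q) ?_ hpar).trans
      (by omega)
    simp only [mem_map, Fin.valEmbedding_apply, forall_exists_index, and_imp,
      forall_apply_eq_imp_iff₂]
    exact fun j hj ↦ ⟨Nat.zero_le _, (hsame j hj).2.mpr hcut⟩
  · refine (card_le_of_forall_mem_Ico_of_mod_two_eq (a := 4 * r + 2 - 2 * q) (b := 4 * r + 2) ?_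
      hpar).trans (by omega)
    simp only [mem_map, Fin.valEmbedding_apply, forall_exists_index, and_imp,
      forall_apply_eq_imp_iff₂]
    exact fun j hj ↦ ⟨not_lt.mp fun h ↦ hcut ((hsame j hj).2.mp h), j.isLt⟩

lemma le_card_sFam_cast_eq_one {r q : ℕ} (hq : q ≤ r) :
    2 * r + 1 - q ≤ #{j : Fin (4 * r + 2) | (sFam r q j : ZMod 40) = 1} := by
  have hsub : (range (2 * r + 1 - q)).image (2 * ·) ⊆
      ({j : Fin (4 * r + 2) | (sFam r q j : ZMod 40) = 1} : Finset _).map Fin.valEmbedding := by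
    simp only [subset_iff, mem_image, mem_range, mem_map, mem_filter, mem_univ, true_and,
      Fin.valEmbedding_apply, forall_exists_index, and_imp]
    rintro _ i hi rfl
    refine ⟨⟨2 * i, by omega⟩, ?_, rfl⟩
    simp [sFam, show 2 * i < 4 * r + 2 - 2 * q by omega]
  simpa [card_image_of_injective _ (mul_right_injective₀ two_ne_zero)] using card_le_card hsub

theorem sFam_not_isometric_general (r : ℕ) (p p' : ℕ) (hpp' : p < p')
    (hp' : p' ≤ r) :
    ¬ ∃ (ℓ : ℤ) (σ : Equiv.Perm (Fin (4 * r + 2))) (ε : Fin (4 * r + 2) → ℤ),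
        IsCoprime ℓ (40 : ℤ) ∧ (∀ j, ε j = 1 ∨ ε j = -1) ∧
        ∀ j, (40 : ℤ) ∣ ℓ * ε j * sFam r p j - sFam r p' (σ j) := by
  rintro ⟨ℓ, σ, ε, -, hε, hdvd⟩
  have hε' : ∀ j, (ε j : ZMod 40) = 1 ∨ (ε j : ZMod 40) = -1 := fun j ↦ by
    rcases hε j with h | h <;> simp [h]
  have hmap : ∀ j, (sFam r p' (σ j) : ZMod 40) = ℓ * ε j * sFam r p j := fun j ↦ by
    exact_mod_cast (ZMod.intCast_eq_intCast_iff_dvd_sub _ _ 40).mpr (hdvd j)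
  have := calc
    2 * r + 1 - p ≤ #{j : Fin (4 * r + 2) | (sFam r p j : ZMod 40) = 1} :=
      le_card_sFam_cast_eq_one (hpp'.le.trans hp')
    _ ≤ #{k | (sFam r p' k : ZMod 40) = ℓ * 1 ∨ (sFam r p' k : ZMod 40) = -(ℓ * 1)} :=
      card_filter_eq_le_card_filter_eq_or_eq_neg σ _ _ hε' hmap
    _ ≤ 2 * r + 1 - p' :=
      card_filter_eq_or_eq_neg_le (sFam_cast_add_ne_zero r p') (card_sFam_cast_eq_le hp') _
  omega

theorem sFam_not_isometric (r : ℕ) (hr : 1 ≤ r) (p p' : ℕ) (hpp' : p < p')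
    (hp' : p' ≤ r) :
    ¬ ∃ (ℓ : ℤ) (σ : Equiv.Perm (Fin (4 * r + 2))) (ε : Fin (4 * r + 2) → ℤ),
        IsCoprime ℓ (40 : ℤ) ∧ (∀ j, ε j = 1 ∨ ε j = -1) ∧
        ∀ j, (40 : ℤ) ∣ ℓ * ε j * sFam r p j - sFam r p' (σ j) :=
  sFam_not_isometric_general r p p' hpp' hp'
end

section
/- Let t ≥ 1 be an integer, set q = 32t and s = (s_1,s_2,s_3,s_4) = (1, 1+4t, 1+16t, 1+28t). Then there exist no integer ℓ coprime to q, no permutation σ of {1,2,3,4}, and no signs ε_1,…,ε_4 ∈ {±1} such that both ℓ·ε_j·s_j ≡ s_{σ(j)} (mod q) for every j and Σ_{j=1}^{4} (ℓ·ε_j·s_j − s_{σ(j)})/q is odd. -/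
/-- The parameter tuple `s = (1, 1+4t, 1+16t, 1+28t)`. -/
def sT (t : ℕ) : Fin 4 → ℤ := ![1, 1 + 4 * t, 1 + 16 * t, 1 + 28 * t]

theorem no_isometry_switching_spin_structures (t : ℕ) (ht : 1 ≤ t) :
    ¬ ∃ (ℓ : ℤ) (σ : Equiv.Perm (Fin 4)) (ε : Fin 4 → ℤ) (ρv : Fin 4 → ℤ),
        IsCoprime ℓ (32 * t : ℤ) ∧ (∀ j, ε j = 1 ∨ ε j = -1) ∧
        (∀ j, ℓ * ε j * sT t j - sT t (σ j) = (32 * t : ℤ) * ρv j) ∧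
        Odd (∑ j, ρv j) := by
  rintro ⟨ℓ, σ, ε, ρv, hcop, hε, heq, hodd⟩
  have ht' : (1 : ℤ) ≤ (t : ℤ) := by exact_mod_cast ht
  -- explicit values of sT
  have hv0 : sT t 0 = 1 := by simp [sT]
  have hv1 : sT t 1 = 1 + 4 * (t : ℤ) := by simp [sT]
  have hv2 : sT t 2 = 1 + 16 * (t : ℤ) := by simp [sT]
  have hv3 : sT t 3 = 1 + 28 * (t : ℤ) := by simp [sT]
  -- generic form
  have hsform : ∀ j : Fin 4, ∃ a : ℤ, (a = 0 ∨ a = 1 ∨ a = 4 ∨ a = 7) ∧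
      sT t j = 1 + 4 * (t : ℤ) * a := by
    intro j
    fin_cases j
    · exact ⟨0, by norm_num, by show sT t 0 = _; rw [hv0]; ring⟩
    · exact ⟨1, by norm_num, by show sT t 1 = _; rw [hv1]; ring⟩
    · exact ⟨4, by norm_num, by show sT t 2 = _; rw [hv2]; ring⟩
    · exact ⟨7, by norm_num, by show sT t 3 = _; rw [hv3]; ring⟩
  -- each ℓ * ε j ≡ 1 (mod 4t)
  have h4t : ∀ j : Fin 4, ∃ c : ℤ, ℓ * ε j - 1 = 4 * (t : ℤ) * c := by
    intro j
    obtain ⟨aj, _, hj⟩ := hsform j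
    obtain ⟨as, _, hs⟩ := hsform (σ j)
    refine ⟨8 * ρv j + as - ℓ * ε j * aj, ?_⟩
    have h := heq j
    rw [hj, hs] at h
    linear_combination h
  have hcop4 : IsCoprime ℓ (4 * (t : ℤ)) :=
    IsCoprime.of_isCoprime_of_dvd_right hcop ⟨8, by ring⟩
  -- all ε j equal
  have hεeq : ∀ j, ε j = ε 0 := by
    intro j
    obtain ⟨c, hc⟩ := h4t j
    obtain ⟨c0, hc0⟩ := h4t 0
    have key : ∀ d : ℤ, (4 * (t : ℤ)) ∣ 2 * ℓ → False := by
      intro d hdvd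
      have h2 : (4 * (t : ℤ)) ∣ 2 := hcop4.symm.dvd_of_dvd_mul_right hdvd
      have := Int.le_of_dvd (by norm_num) h2
      linarith
    rcases hε j with h1 | h1 <;> rcases hε 0 with h2 | h2 <;> rw [h1, h2]
    · exfalso
      exact key 0 ⟨c - c0, by rw [h1] at hc; rw [h2] at hc0; linear_combination hc - hc0⟩
    · exfalso
      exact key 0 ⟨c0 - c, by rw [h1] at hc; rw [h2] at hc0; linear_combination hc0 - hc⟩
  -- equation at j = 0 : ℓ * ε 0 = 1 + 4t * k
  obtain ⟨a0, ha0, hs0⟩ := hsform (σ 0)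
  have h0 := heq 0
  rw [hv0, hs0] at h0
  set k : ℤ := a0 + 8 * ρv 0 with hkdef
  have hle : ℓ * ε 0 = 1 + 4 * (t : ℤ) * k := by rw [hkdef]; linear_combination h0
  -- sum of sT over permuted indices
  have hstot : ∑ j : Fin 4, sT t j = 4 + 48 * (t : ℤ) := by
    rw [Fin.sum_univ_four, hv0, hv1, hv2, hv3]; ring
  have hperm : sT t (σ 0) + sT t (σ 1) + sT t (σ 2) + sT t (σ 3) = 4 + 48 * (t : ℤ) := by
    have h := Equiv.sum_comp σ (sT t)
    rw [hstot, Fin.sum_univ_four] at h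
    exact h
  set S : ℤ := ∑ j, ρv j with hSdef
  have hSsum : S = ρv 0 + ρv 1 + ρv 2 + ρv 3 := by rw [hSdef, Fin.sum_univ_four]
  -- summed equation
  have hbig : (ℓ * ε 0 - 1) * (4 + 48 * (t : ℤ)) = 32 * (t : ℤ) * S := by
    have e0 := heq 0
    have e1 := heq 1
    have e2 := heq 2
    have e3 := heq 3
    rw [hv0] at e0
    rw [hv1, hεeq 1] at e1
    rw [hv2, hεeq 2] at e2
    rw [hv3, hεeq 3] at e3
    rw [hSsum]
    linear_combination e0 + e1 + e2 + e3 + hperm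
  -- cancel 4t : k * (1 + 12t) = 2S
  have hkey : (4 * (t : ℤ)) * (4 * (k * (1 + 12 * (t : ℤ)))) = (4 * (t : ℤ)) * (8 * S) := by
    linear_combination hbig - (4 + 48 * (t : ℤ)) * hle
  have htne : (4 * (t : ℤ)) ≠ 0 := by positivity
  have hcanc : 4 * (k * (1 + 12 * (t : ℤ))) = 8 * S := mul_left_cancel₀ htne hkey
  set u : ℤ := k * (1 + 12 * (t : ℤ)) with hudef
  have hu : u = 2 * S := by omega
  -- k is even
  have hkeven : Even k := by
    have huev : Even u := ⟨S, by omega⟩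
    rcases Int.even_mul.mp huev with h | h
    · exact h
    · exfalso; obtain ⟨r, hr⟩ := h; omega
  -- in fact 4 ∣ k
  have h4k : (4 : ℤ) ∣ k := by
    obtain ⟨c, hc⟩ := hkeven
    rcases ha0 with h | h | h | h <;> omega
  obtain ⟨m, hm⟩ := h4k
  obtain ⟨n, hn⟩ := hodd
  have hfin : 4 * (m * (1 + 12 * (t : ℤ))) = u := by rw [hudef, hm]; ring
  have hSn : S = 2 * n + 1 := hn
  omega
end

section
/- Let r ≥ 7 be an odd integer, and set s = (1, 1+r, 1+2r, 1+4r) and s' = (1, 1−r, 1−2r, 1−4r). Then there exist no integer ℓ coprime to r², no permutation σ of {1,2,3,4}, and no signs ε_1,…,ε_4 ∈ {±1} such that ℓ·ε_j·s_j ≡ s'_{σ(j)} (mod r²) for every j. -/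
/-!
Write the entries of the two tuples as `1 + a j * r` and `1 - a j * r` with `a = (0, 1, 2, 4)`.
Reducing the congruences modulo `r` gives `ℓ * ε j ≡ 1`, so (as `r > 2`) all signs agree; modulo
`r²` they then say that `a j + a (σ j)` is independent of `j` modulo `r`. Comparing with `j = 0`,
the differences `a j + a (σ j) - a (σ 0)` lie in `[-4, 8]` and are divisible by the odd `r ≥ 7`,
so each is `0` or `7`, and no permutation of `Fin 4` achieves that.
-/

namespace LensSpace

section Congruences

variable {r x a b c d : ℤ}

theorem dvd_sub_one_of_sq_dvd (h : r ^ 2 ∣ x * (1 + a * r) - (1 + b * r)) : r ∣ x - 1 := by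
  have hsplit : x - 1 = (x * (1 + a * r) - (1 + b * r)) - r * (x * a - b) := by ring
  rw [hsplit]
  exact dvd_sub ((dvd_pow_self r two_ne_zero).trans h) (dvd_mul_right r _)

theorem dvd_sub_sub_of_sq_dvd (hr : r ≠ 0) (hx : r ∣ x - 1)
    (hab : r ^ 2 ∣ x * (1 + a * r) - (1 + b * r)) (hcd : r ^ 2 ∣ x * (1 + c * r) - (1 + d * r)) :
    r ∣ (a - b) - (c - d) := by
  have hdiff : r * r ∣ r * (x * (a - c) - (b - d)) := by
    have hsplit : r * (x * (a - c) - (b - d))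
        = (x * (1 + a * r) - (1 + b * r)) - (x * (1 + c * r) - (1 + d * r)) := by ring
    rw [hsplit, ← sq]
    exact dvd_sub hab hcd
  have hmod : r ∣ x * (a - c) - (b - d) := (mul_dvd_mul_iff_left hr).mp hdiff
  have hsplit : (a - b) - (c - d) = (x * (a - c) - (b - d)) - (x - 1) * (a - c) := by ring
  rw [hsplit]
  exact dvd_sub hmod (dvd_mul_of_dvd_left hx _)

theorem sign_eq_of_dvd_mul_sub_one (hr : 2 < r) {ℓ e f : ℤ} (he : e = 1 ∨ e = -1)
    (hf : f = 1 ∨ f = -1) (hℓe : r ∣ ℓ * e - 1) (hℓf : r ∣ ℓ * f - 1) : e = f := by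
  by_contra hne
  have hfe : f = -e := by omega
  have h2 : r ∣ 2 := by
    have hsum : (2 : ℤ) = -((ℓ * e - 1) + (ℓ * f - 1)) := by rw [hfe]; ring
    rw [hsum]
    exact (dvd_add hℓe hℓf).neg_right
  have := Int.le_of_dvd two_pos h2
  omega

/-- A lens-space isometry between `L(r²; 1 + a j * r)` and `L(r²; 1 + b j * r)` forces
`a - b` to be constant modulo `r`. -/
theorem dvd_sub_sub_of_sign_congr {ι : Type*} (hr : 2 < r) {ℓ : ℤ} {a b ε : ι → ℤ}
    (hε : ∀ j, ε j = 1 ∨ ε j = -1) (h : ∀ j, r ^ 2 ∣ ℓ * ε j * (1 + a j * r) - (1 + b j * r))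
    (i j : ι) : r ∣ (a i - b i) - (a j - b j) := by
  have hi := dvd_sub_one_of_sq_dvd (h i)
  have hsign : ε i = ε j :=
    sign_eq_of_dvd_mul_sub_one hr (hε i) (hε j) hi (dvd_sub_one_of_sq_dvd (h j))
  have hj := h j
  rw [← hsign] at hj
  exact dvd_sub_sub_of_sq_dvd (by omega) hi (h i) hj

end Congruences

theorem eq_zero_or_eq_seven_of_dvd {r c : ℤ} (hr : 7 ≤ r) (hodd : Odd r) (hc : r ∣ c)
    (hlo : -7 < c) (hhi : c < 9) : c = 0 ∨ c = 7 := by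
  obtain ⟨k, rfl⟩ := hc
  have hk0 : 0 ≤ k := by nlinarith
  have hk1 : k ≤ 1 := by nlinarith
  obtain ⟨t, rfl⟩ := hodd
  interval_cases k <;> omega

def weight : Fin 4 → ℤ := ![0, 1, 2, 4]

theorem one_add_weight_mul (r : ℤ) (i : Fin 4) :
    (![1, 1 + r, 1 + 2 * r, 1 + 4 * r] : Fin 4 → ℤ) i = 1 + weight i * r := by
  fin_cases i <;> simp [weight]

theorem one_sub_weight_mul (r : ℤ) (i : Fin 4) :
    (![1, 1 - r, 1 - 2 * r, 1 - 4 * r] : Fin 4 → ℤ) i = 1 + -weight i * r := by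
  fin_cases i <;> simp [weight] <;> ring

theorem weight_add_sub_mem_Ioo (i j k : Fin 4) :
    weight i + weight j - weight k ∈ Set.Ioo (-7) 9 := by
  simp only [Set.mem_Ioo]
  revert i j k
  decide

theorem not_forall_weight_add_sub_eq_zero_or_seven (σ : Equiv.Perm (Fin 4)) :
    ¬ ∀ j, weight j + weight (σ j) - weight (σ 0) = 0 ∨
      weight j + weight (σ j) - weight (σ 0) = 7 := by
  revert σ
  decide

end LensSpace

open LensSpace in
theorem q_odd_pair_not_isometric (r : ℕ) (hr : 7 ≤ r) (hrodd : Odd r) :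
    ¬ ∃ (ℓ : ℤ) (σ : Equiv.Perm (Fin 4)) (ε : Fin 4 → ℤ),
        IsCoprime ℓ ((r : ℤ) ^ 2) ∧ (∀ j, ε j = 1 ∨ ε j = -1) ∧
        ∀ j, ((r : ℤ) ^ 2) ∣
          ℓ * ε j * (![1, 1 + r, 1 + 2 * r, 1 + 4 * r] : Fin 4 → ℤ) j -
            (![1, 1 - (r : ℤ), 1 - 2 * (r : ℤ), 1 - 4 * (r : ℤ)] : Fin 4 → ℤ) (σ j) := by
  rintro ⟨ℓ, σ, ε, -, hε, hdvd⟩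
  have hr' : (7 : ℤ) ≤ r := by exact_mod_cast hr
  have hcongr : ∀ j, (r : ℤ) ^ 2 ∣
      ℓ * ε j * (1 + weight j * r) - (1 + -weight (σ j) * r) := by
    intro j
    simpa only [one_add_weight_mul, one_sub_weight_mul] using hdvd j
  refine not_forall_weight_add_sub_eq_zero_or_seven σ fun j ↦ ?_
  have hj := dvd_sub_sub_of_sign_congr (by omega) hε hcongr j 0
  obtain ⟨hlo, hhi⟩ := weight_add_sub_mem_Ioo j (σ j) (σ 0)
  refine eq_zero_or_eq_seven_of_dvd hr' hrodd.natCast ?_ hlo hhi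
  convert hj using 1
  rw [show weight 0 = 0 from rfl]
  ring
end

section
/- Let q and m be positive integers and let 𝓛 be a set of vectors ½(a_1,…,a_m) with all a_j odd integers, such that for all h ∈ ℤ^m a vector μ (with odd coordinates times ½) lies in 𝓛 if and only if μ + q·h lies in 𝓛. Call μ = ½(a_1,…,a_m) q-reduced if |a_j| < 2q for all j, and let N^red_𝓛(ε,k) be the number of q-reduced μ ∈ 𝓛 with ‖μ‖₁ = k + m/2 and R(μ) ≡ ε (mod 2). Then for every ε ∈ {0,1} and every integer k ≥ 0: N_𝓛(ε,k) = Σ_{β=0}^{⌊k/q⌋} C(β+m−1, m−1) · N^red_𝓛(ε, k−βq). -/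
/-- `N^red_𝓛(ε,k)`: the number of `q`-reduced `μ = ½(a_1,…,a_m) ∈ 𝓛` (i.e. `|a_j| < 2q`
for all `j`) with `‖μ‖₁ = k + m/2` and `R(μ) ≡ ε (mod 2)`. -/
noncomputable def NcountRed (q : ℕ) {m : ℕ} (L : Set (Fin m → ℤ)) (ε k : ℕ) : ℕ :=
  Set.ncard {a | a ∈ L ∧ (∀ j, |a j| < 2 * (q : ℤ)) ∧
    (∑ j, |a j|) = 2 * (k : ℤ) + m ∧ negCount a % 2 = ε}

open Finset

namespace Int

variable {a r s : ℤ}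

theorem ne_zero_of_odd (ha : Odd a) : a ≠ 0 := by
  rintro rfl; simp at ha

theorem odd_sign (ha : a ≠ 0) : Odd a.sign := by
  rw [← Int.natAbs_odd, Int.natAbs_sign_of_ne_zero ha]; exact odd_one

theorem sign_add_sign_mul (hr : r ≠ 0) (hs : 0 ≤ s) : (r + r.sign * s).sign = r.sign := by
  rcases hr.lt_or_gt with hr | hr
  · rw [sign_eq_neg_one_of_neg hr, sign_eq_neg_one_of_neg (by linarith)]
  · rw [sign_eq_one_of_pos hr, sign_eq_one_of_pos (by linarith)]

theorem abs_add_sign_mul (hr : r ≠ 0) (hs : 0 ≤ s) : |r + r.sign * s| = |r| + s := by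
  rcases hr.lt_or_gt with hr | hr
  · rw [sign_eq_neg_one_of_neg hr, abs_of_neg hr, abs_of_neg (by linarith)]; ring
  · rw [sign_eq_one_of_pos hr, abs_of_pos hr, abs_of_pos (by linarith)]; ring

end Int

theorem Finset.Nat.card_antidiagonalTuple (m n : ℕ) :
    #(Finset.Nat.antidiagonalTuple m n) = (m + n - 1).choose n := by
  rw [← piAntidiag_univ_fin_eq_antidiagonalTuple, ← map_sym_eq_piAntidiag, card_map, sym_univ,
    card_univ, Sym.card_sym_eq_choose, Fintype.card_fin]

theorem ncard_setOf_sum_le_and_mem {α : Type*} (A : ℕ → Set α) (hA : ∀ n, (A n).Finite)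
    (m N : ℕ) :
    {p : α × (Fin m → ℕ) | ∑ j, p.2 j ≤ N ∧ p.1 ∈ A (∑ j, p.2 j)}.ncard =
      ∑ n ∈ range (N + 1), (A n).ncard * #(Finset.Nat.antidiagonalTuple m n) := by
  have hunion : {p : α × (Fin m → ℕ) | ∑ j, p.2 j ≤ N ∧ p.1 ∈ A (∑ j, p.2 j)} =
      ⋃ n ∈ (range (N + 1) : Set ℕ), A n ×ˢ ↑(Finset.Nat.antidiagonalTuple m n) := by
    ext ⟨a, t⟩
    simp only [Set.mem_ofPred_eq, Set.mem_iUnion, Set.mem_prod, Finset.mem_coe, mem_range,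
      Finset.Nat.mem_antidiagonalTuple, Nat.lt_succ_iff, exists_prop]
    exact ⟨fun h => ⟨_, h.1, h.2, rfl⟩, by rintro ⟨n, hn, ha, rfl⟩; exact ⟨hn, ha⟩⟩
  have hdisj : (range (N + 1) : Set ℕ).PairwiseDisjoint
      fun n => A n ×ˢ (Finset.Nat.antidiagonalTuple m n : Set (Fin m → ℕ)) := by
    intro n _ n' _ hne
    refine Set.disjoint_prod.2 (Or.inr (Finset.disjoint_coe.2 (disjoint_left.2 fun t ht ht' => ?_)))
    rw [Finset.Nat.mem_antidiagonalTuple] at ht ht'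
    exact hne (ht.symm.trans ht')
  rw [hunion, Set.Finite.ncard_biUnion (finite_toSet _) (fun n _ => (hA n).prod (finite_toSet _))
    hdisj, finsum_mem_coe_finset]
  simp only [Set.ncard_prod, Set.ncard_coe_finset]

theorem finite_setOf_forall_abs_lt {ι : Type*} [Finite ι] (N : ℤ) :
    {a : ι → ℤ | ∀ j, |a j| < N}.Finite :=
  (Set.Finite.pi fun _ => Set.finite_Ioo (-N) N).subset fun _ ha j _ => abs_lt.1 (ha j)

theorem natCast_card_le_sum_abs {ι : Type*} [Fintype ι] {a : ι → ℤ} (ha : ∀ j, a j ≠ 0) :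
    (Fintype.card ι : ℤ) ≤ ∑ j, |a j| := by
  simpa using card_nsmul_le_sum univ (fun j => |a j|) 1 fun j _ => Int.one_le_abs (ha j)

theorem add_two_mul_eq_iff {x : ℤ} {q k m s : ℕ} (hq : 0 < q) (hx : (m : ℤ) ≤ x) :
    x + 2 * q * s = 2 * k + m ↔ s ≤ k / q ∧ x = 2 * ((k - s * q : ℕ) : ℤ) + m := by
  rw [Nat.le_div_iff_mul_le hq]
  constructor
  · intro h
    have hsq : s * q ≤ k := by
      have : ((s * q : ℕ) : ℤ) ≤ k := by push_cast; linarith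
      exact_mod_cast this
    refine ⟨hsq, ?_⟩
    push_cast [hsq]
    linarith
  · rintro ⟨hsq, rfl⟩
    push_cast [hsq]
    ring

section

variable {q : ℕ} {a r r' : ℤ} {t t' : ℕ}

def liftReduced (q : ℕ) (r : ℤ) (t : ℕ) : ℤ := r + r.sign * (2 * q * t)

theorem sign_liftReduced (hr : r ≠ 0) : (liftReduced q r t).sign = r.sign :=
  Int.sign_add_sign_mul hr (by positivity)

theorem abs_liftReduced (hr : r ≠ 0) : |liftReduced q r t| = |r| + 2 * q * t :=
  Int.abs_add_sign_mul hr (by positivity)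

theorem liftReduced_neg_iff (hr : r ≠ 0) : liftReduced q r t < 0 ↔ r < 0 := by
  rw [← Int.sign_eq_neg_one_iff_neg, sign_liftReduced hr, Int.sign_eq_neg_one_iff_neg]

theorem liftReduced_inj (hr : r ≠ 0) (hr' : r' ≠ 0) (hlt : |r| < 2 * q) (hlt' : |r'| < 2 * q) :
    liftReduced q r t = liftReduced q r' t' ↔ r = r' ∧ t = t' := by
  refine ⟨fun h => ?_, by rintro ⟨rfl, rfl⟩; rfl⟩
  have hsign : r.sign = r'.sign := by rw [← sign_liftReduced hr, h, sign_liftReduced hr']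
  have habs : |r| + 2 * q * t = |r'| + 2 * q * t' := by
    rw [← abs_liftReduced hr, h, abs_liftReduced hr']
  have h2q : (2 * q : ℤ) ≠ 0 := ((abs_nonneg r).trans_lt hlt).ne'
  have hdiv (x : ℤ) (s : ℕ) (hx : |x| < 2 * q) : (|x| + 2 * q * s) / (2 * q) = s := by
    rw [Int.add_mul_ediv_left _ _ h2q, Int.ediv_eq_zero_of_lt (abs_nonneg x) hx, zero_add]
  have htt : t = t' := by
    have := congrArg (· / (2 * q : ℤ)) habs
    simp only [hdiv r t hlt, hdiv r' t' hlt'] at this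
    exact_mod_cast this
  subst htt
  refine ⟨?_, rfl⟩
  have habs' : |r| = |r'| := by linarith
  rw [← Int.sign_mul_abs r, ← Int.sign_mul_abs r', hsign, habs']

theorem exists_liftReduced_eq (hq : 0 < q) (ha : Odd a) :
    ∃ (r : ℤ) (t : ℕ), Odd r ∧ |r| < 2 * q ∧ liftReduced q r t = a := by
  have ha0 := Int.ne_zero_of_odd ha
  have hmod : Odd (a.natAbs % (2 * q)) := ha.natAbs.mod_even (even_two_mul q)
  have hmod0 : ((a.natAbs % (2 * q) : ℕ) : ℤ) ≠ 0 := by exact_mod_cast hmod.pos.ne'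
  refine ⟨a.sign * ((a.natAbs % (2 * q) : ℕ) : ℤ), a.natAbs / (2 * q), ?_, ?_, ?_⟩
  · exact Int.odd_mul.2 ⟨Int.odd_sign ha0, by exact_mod_cast hmod⟩
  · rw [abs_mul, Int.abs_sign_of_ne_zero ha0, one_mul, Nat.abs_cast]
    exact_mod_cast Nat.mod_lt _ (by omega)
  · have hsign : (a.sign * (a.natAbs % (2 * q) : ℕ)).sign = a.sign := by
      rw [Int.sign_mul, Int.sign_sign, Int.sign_natCast_of_ne_zero (by exact_mod_cast hmod0),
        mul_one]
    calc liftReduced q (a.sign * (a.natAbs % (2 * q) : ℕ)) (a.natAbs / (2 * q))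
        = a.sign * ((a.natAbs % (2 * q) + 2 * q * (a.natAbs / (2 * q)) : ℕ) : ℤ) := by
          rw [liftReduced, hsign]; push_cast; ring
      _ = a := by rw [Nat.mod_add_div, Int.sign_mul_natAbs]

end

section

variable {ι : Type*} {q : ℕ}

def liftReducedPi (q : ℕ) (p : (ι → ℤ) × (ι → ℕ)) : ι → ℤ :=
  fun j => liftReduced q (p.1 j) (p.2 j)

theorem injOn_liftReducedPi :
    Set.InjOn (liftReducedPi (ι := ι) q) {p | ∀ j, p.1 j ≠ 0 ∧ |p.1 j| < 2 * q} := by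
  intro p hp p' hp' h
  have hj (j : ι) := (liftReduced_inj (hp j).1 (hp' j).1 (hp j).2 (hp' j).2).1 (congrFun h j)
  exact Prod.ext (funext fun j => (hj j).1) (funext fun j => (hj j).2)

theorem exists_liftReducedPi_eq (hq : 0 < q) {a : ι → ℤ} (ha : ∀ j, Odd (a j)) :
    ∃ p : (ι → ℤ) × (ι → ℕ), (∀ j, Odd (p.1 j) ∧ |p.1 j| < 2 * q) ∧ liftReducedPi q p = a := by
  choose r t hr hlt heq using fun j => exists_liftReduced_eq hq (ha j)
  exact ⟨(r, t), fun j => ⟨hr j, hlt j⟩, funext heq⟩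

theorem liftReducedPi_mem_iff {L : Set (ι → ℤ)}
    (hinv : ∀ (a h : ι → ℤ), (∀ j, Odd (a j)) → (a ∈ L ↔ (fun j => a j + 2 * (q : ℤ) * h j) ∈ L))
    {p : (ι → ℤ) × (ι → ℕ)} (hp : ∀ j, Odd (p.1 j)) : liftReducedPi q p ∈ L ↔ p.1 ∈ L := by
  rw [hinv p.1 (fun j => (p.1 j).sign * p.2 j) hp]
  convert Iff.rfl using 2
  funext j
  simp only [liftReducedPi, liftReduced]
  ring

theorem sum_abs_liftReducedPi [Fintype ι] {p : (ι → ℤ) × (ι → ℕ)} (hp : ∀ j, p.1 j ≠ 0) :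
    ∑ j, |liftReducedPi q p j| = ∑ j, |p.1 j| + 2 * q * (∑ j, p.2 j : ℕ) := by
  simp only [liftReducedPi, abs_liftReduced (hp _), sum_add_distrib, Nat.cast_sum, mul_sum]

end

section

variable {m q : ℕ} {L : Set (Fin m → ℤ)}

theorem negCount_liftReducedPi {p : (Fin m → ℤ) × (Fin m → ℕ)} (hp : ∀ j, p.1 j ≠ 0) :
    negCount (liftReducedPi q p) = negCount p.1 := by
  simp only [negCount, liftReducedPi, liftReduced_neg_iff (hp _)]

theorem image_liftReducedPi (hq : 0 < q) (hodd : ∀ a ∈ L, ∀ j, Odd (a j))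
    (hinv : ∀ (a h : Fin m → ℤ), (∀ j, Odd (a j)) →
      (a ∈ L ↔ (fun j => a j + 2 * (q : ℤ) * h j) ∈ L)) (ε : ℕ) (N : ℤ) :
    liftReducedPi q '' {p | p.1 ∈ L ∧ (∀ j, |p.1 j| < 2 * q) ∧
      ∑ j, |p.1 j| + 2 * q * (∑ j, p.2 j : ℕ) = N ∧ negCount p.1 % 2 = ε} =
      {a | a ∈ L ∧ ∑ j, |a j| = N ∧ negCount a % 2 = ε} := by
  ext a
  constructor
  · rintro ⟨p, ⟨hL, -, hsum, hpar⟩, rfl⟩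
    have hp := hodd _ hL
    have hp0 j := Int.ne_zero_of_odd (hp j)
    exact ⟨(liftReducedPi_mem_iff hinv hp).2 hL, sum_abs_liftReducedPi hp0 ▸ hsum,
      negCount_liftReducedPi hp0 ▸ hpar⟩
  · rintro ⟨hL, hsum, hpar⟩
    obtain ⟨p, hp, rfl⟩ := exists_liftReducedPi_eq hq (hodd a hL)
    have hp0 j := Int.ne_zero_of_odd (hp j).1
    exact ⟨p, ⟨(liftReducedPi_mem_iff hinv fun j => (hp j).1).1 hL, fun j => (hp j).2,
      sum_abs_liftReducedPi hp0 ▸ hsum, negCount_liftReducedPi hp0 ▸ hpar⟩, rfl⟩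

theorem ncard_eq_ncard_reduced_prod_levels (hq : 0 < q) (hodd : ∀ a ∈ L, ∀ j, Odd (a j))
    (hinv : ∀ (a h : Fin m → ℤ), (∀ j, Odd (a j)) →
      (a ∈ L ↔ (fun j => a j + 2 * (q : ℤ) * h j) ∈ L)) (ε : ℕ) (N : ℤ) :
    {a | a ∈ L ∧ ∑ j, |a j| = N ∧ negCount a % 2 = ε}.ncard =
      {p : (Fin m → ℤ) × (Fin m → ℕ) | p.1 ∈ L ∧ (∀ j, |p.1 j| < 2 * q) ∧
        ∑ j, |p.1 j| + 2 * q * (∑ j, p.2 j : ℕ) = N ∧ negCount p.1 % 2 = ε}.ncard := by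
  rw [← image_liftReducedPi hq hodd hinv]
  refine (injOn_liftReducedPi.mono fun p hp j => ⟨?_, hp.2.1 j⟩).ncard_image
  exact Int.ne_zero_of_odd (hodd _ hp.1 j)

end

theorem Ncount_eq_sum_NcountRed_general (q m : ℕ) (hq : 0 < q) (hm : 0 < m)
    (L : Set (Fin m → ℤ))
    (hodd : ∀ a ∈ L, ∀ j, Odd (a j))
    (hinv : ∀ (a h : Fin m → ℤ), (∀ j, Odd (a j)) →
      (a ∈ L ↔ (fun j => a j + 2 * (q : ℤ) * h j) ∈ L))
    (ε k : ℕ) :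
    Ncount L ε k =
      ∑ β ∈ Finset.range (k / q + 1),
        Nat.choose (β + m - 1) (m - 1) * NcountRed q L ε (k - β * q) := by
  set A : ℕ → Set (Fin m → ℤ) := fun β => {a | a ∈ L ∧ (∀ j, |a j| < 2 * (q : ℤ)) ∧
    (∑ j, |a j|) = 2 * ((k - β * q : ℕ) : ℤ) + m ∧ negCount a % 2 = ε}
  have hA β : (A β).Finite := (finite_setOf_forall_abs_lt _).subset fun _ ha => ha.2.1
  have hlevels : {p : (Fin m → ℤ) × (Fin m → ℕ) | p.1 ∈ L ∧ (∀ j, |p.1 j| < 2 * q) ∧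
      ∑ j, |p.1 j| + 2 * q * (∑ j, p.2 j : ℕ) = 2 * k + m ∧ negCount p.1 % 2 = ε} =
      {p | ∑ j, p.2 j ≤ k / q ∧ p.1 ∈ A (∑ j, p.2 j)} := by
    have hsum_iff {r} (hr : r ∈ L) (s : ℕ) := add_two_mul_eq_iff (s := s) (k := k) hq
      (by simpa using natCast_card_le_sum_abs fun j => Int.ne_zero_of_odd (hodd r hr j))
    ext ⟨r, t⟩
    exact ⟨fun ⟨hL, hred, hsum, hpar⟩ => ⟨((hsum_iff hL _).1 hsum).1, hL, hred,
      ((hsum_iff hL _).1 hsum).2, hpar⟩,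
      fun ⟨hle, hL, hred, hsum, hpar⟩ => ⟨hL, hred, (hsum_iff hL _).2 ⟨hle, hsum⟩, hpar⟩⟩
  rw [Ncount, ncard_eq_ncard_reduced_prod_levels hq hodd hinv, hlevels,
    ncard_setOf_sum_le_and_mem A hA]
  refine sum_congr rfl fun β _ => ?_
  rw [Finset.Nat.card_antidiagonalTuple, mul_comm, add_comm m β,
    Nat.choose_symm_of_eq_add (b := m - 1) (by omega)]
  rfl

theorem Ncount_eq_sum_NcountRed (q m : ℕ) (hq : 0 < q) (hm : 0 < m)
    (L : Set (Fin m → ℤ))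
    (hodd : ∀ a ∈ L, ∀ j, Odd (a j))
    (hinv : ∀ (a h : Fin m → ℤ), (∀ j, Odd (a j)) →
      (a ∈ L ↔ (fun j => a j + 2 * (q : ℤ) * h j) ∈ L))
    (ε k : ℕ) (hε : ε = 0 ∨ ε = 1) :
    Ncount L ε k =
      ∑ β ∈ Finset.range (k / q + 1),
        Nat.choose (β + m - 1) (m - 1) * NcountRed q L ε (k - β * q) :=
  Ncount_eq_sum_NcountRed_general q m hq hm L hodd hinv ε k
end

section
/- Let q and m be positive integers and let 𝓛 and 𝓛' be sets of vectors ½(a_1,…,a_m) with all a_j odd integers, each invariant in the sense that μ ∈ 𝓛 iff μ + q·h ∈ 𝓛 for all h ∈ ℤ^m (and likewise for 𝓛'). If N_𝓛(ε,k) = N_{𝓛'}(ε,k) for every ε ∈ {0,1} and every integer k with 0 ≤ k < mq, then N_𝓛(ε,k) = N_{𝓛'}(ε,k) for every ε ∈ {0,1} and every integer k ≥ 0, i.e. 𝓛 and 𝓛' are oriented ‖·‖₁-isospectral. -/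
def Aset {m : ℕ} (L : Set (Fin m → ℤ)) (ε k : ℕ) : Set (Fin m → ℤ) :=
  {a | a ∈ L ∧ (∑ j, |a j|) = 2 * (k : ℤ) + m ∧ negCount a % 2 = ε}

lemma Ncount_eq {m : ℕ} (L : Set (Fin m → ℤ)) (ε k : ℕ) :
    Ncount L ε k = (Aset L ε k).ncard := rfl

lemma odd_ne_zero {x : ℤ} (h : Odd x) : x ≠ 0 := by
  rcases h with ⟨c, hc⟩; omega

def sg (x : ℤ) : ℤ := if x < 0 then -1 else 1

lemma sg_add_spec (q : ℕ) {x : ℤ} (hx : x ≠ 0) :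
    (x + 2*(q:ℤ)*sg x < 0 ↔ x < 0) ∧ |x + 2*(q:ℤ)*sg x| = |x| + 2*q := by
  have hq : (0:ℤ) ≤ q := Int.natCast_nonneg q
  rcases lt_or_gt_of_ne hx with h | h
  · have hsg : sg x = -1 := by simp [sg, h]
    have e : x + 2*(q:ℤ)*sg x = x - 2*q := by rw [hsg]; ring
    rw [e, abs_of_neg h, abs_of_neg (by omega : x - 2*(q:ℤ) < 0)]
    exact ⟨by constructor <;> intro <;> omega, by ring⟩
  · have hsg : sg x = 1 := by simp [sg, not_lt.mpr h.le]
    have e : x + 2*(q:ℤ)*sg x = x + 2*q := by rw [hsg]; ring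
    rw [e, abs_of_pos h, abs_of_pos (by omega : (0:ℤ) < x + 2*q)]
    exact ⟨by constructor <;> intro <;> omega, by ring⟩

lemma sg_sub_spec (q : ℕ) {x : ℤ} (hx : 2*(q:ℤ) < |x|) :
    (x - 2*(q:ℤ)*sg x < 0 ↔ x < 0) ∧ |x - 2*(q:ℤ)*sg x| = |x| - 2*q ∧
      sg (x - 2*(q:ℤ)*sg x) = sg x := by
  have hq : (0:ℤ) ≤ q := Int.natCast_nonneg q
  rcases lt_or_ge x 0 with h | h
  · rw [abs_of_neg h] at hx
    have hsg : sg x = -1 := by simp [sg, h]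
    have e : x - 2*(q:ℤ)*sg x = x + 2*q := by rw [hsg]; ring
    have hneg : x + 2*(q:ℤ) < 0 := by omega
    rw [e, abs_of_neg h, abs_of_neg hneg]
    refine ⟨by constructor <;> intro <;> omega, by ring, ?_⟩
    rw [hsg]; simp [sg, hneg]
  · rw [abs_of_nonneg h] at hx
    have hsg : sg x = 1 := by simp [sg, not_lt.mpr h]
    have e : x - 2*(q:ℤ)*sg x = x - 2*q := by rw [hsg]; ring
    have hpos : (0:ℤ) ≤ x - 2*q := by omega
    rw [e, abs_of_nonneg h, abs_of_nonneg hpos]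
    refine ⟨by constructor <;> intro <;> omega, rfl, ?_⟩
    rw [hsg]; simp [sg, not_lt.mpr hpos]

lemma Aset_finite {m : ℕ} (L : Set (Fin m → ℤ)) (ε k : ℕ) : (Aset L ε k).Finite := by
  have hsub : Aset L ε k ⊆ Set.pi Set.univ
      (fun _ : Fin m => Set.Icc (-(2*(k:ℤ)+m)) (2*(k:ℤ)+m)) := by
    rintro a ⟨-, hsum, -⟩ j -
    have h1 : |a j| ≤ ∑ i, |a i| :=
      Finset.single_le_sum (f := fun i => |a i|) (fun i _ => abs_nonneg _) (Finset.mem_univ j)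
    rw [hsum] at h1
    simpa [Set.mem_Icc] using abs_le.mp h1
  exact (Set.Finite.pi (fun _ => Set.finite_Icc _ _)).subset hsub

lemma shift_ncard (q : ℕ) {m : ℕ} (L : Set (Fin m → ℤ))
    (hodd : ∀ a ∈ L, ∀ j, Odd (a j))
    (hinv : ∀ (a h : Fin m → ℤ), (∀ j, Odd (a j)) →
      (a ∈ L ↔ (fun j => a j + 2 * (q : ℤ) * h j) ∈ L))
    (ε n : ℕ) (T : Finset (Fin m)) :
    {a | a ∈ Aset L ε (n + q * T.card) ∧ ∀ j ∈ T, 2*(q:ℤ) < |a j|}.ncard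
      = Ncount L ε n := by
  classical
  set φ : (Fin m → ℤ) → (Fin m → ℤ) :=
    fun a j => a j + 2*(q:ℤ) * (if j ∈ T then sg (a j) else 0) with hφ
  have hmap : ∀ a ∈ Aset L ε n,
      φ a ∈ {a | a ∈ Aset L ε (n + q * T.card) ∧ ∀ j ∈ T, 2*(q:ℤ) < |a j|} := by
    rintro a ⟨haL, hsum, hpar⟩
    have hoddA := hodd a haL
    have hne : ∀ j, a j ≠ 0 := fun j => odd_ne_zero (hoddA j)
    have hsign : ∀ j, (φ a j < 0 ↔ a j < 0) := by
      intro j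
      by_cases hj : j ∈ T
      · simpa [hφ, hj] using (sg_add_spec q (hne j)).1
      · simp [hφ, hj]
    have habs : ∀ j, |φ a j| = |a j| + (if j ∈ T then 2*(q:ℤ) else 0) := by
      intro j
      by_cases hj : j ∈ T
      · simpa [hφ, hj] using (sg_add_spec q (hne j)).2
      · simp [hφ, hj]
    refine ⟨⟨(hinv a _ hoddA).mp haL, ?_, ?_⟩, ?_⟩
    · rw [Finset.sum_congr rfl (fun j _ => habs j), Finset.sum_add_distrib, hsum,
        Finset.sum_ite_mem, Finset.univ_inter, Finset.sum_const]
      push_cast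
      ring
    · have hnc : negCount (φ a) = negCount a := by
        unfold negCount
        congr 1
        apply Finset.filter_congr
        intro j _
        simp [hsign j]
      rw [hnc, hpar]
    · intro j hj
      have h1 : 0 < |a j| := abs_pos.mpr (hne j)
      have h2 := habs j
      rw [if_pos hj] at h2
      rw [h2]; linarith
  have hinj : Set.InjOn φ (Aset L ε n) := by
    rintro a ⟨haL, -, -⟩ b ⟨hbL, -, -⟩ hab
    have hna : ∀ j, a j ≠ 0 := fun j => odd_ne_zero (hodd a haL j)
    have hnb : ∀ j, b j ≠ 0 := fun j => odd_ne_zero (hodd b hbL j)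
    funext j
    have h1 := congrFun hab j
    by_cases hj : j ∈ T
    · simp only [hφ, if_pos hj] at h1
      have hiff : a j < 0 ↔ b j < 0 := by
        rw [← (sg_add_spec q (hna j)).1, ← (sg_add_spec q (hnb j)).1, h1]
      by_cases hlt : a j < 0
      · have hlt' : b j < 0 := hiff.mp hlt
        have e1 : sg (a j) = -1 := by simp [sg, hlt]
        have e2 : sg (b j) = -1 := by simp [sg, hlt']
        rw [e1, e2] at h1; linarith
      · have hlt' : ¬ b j < 0 := fun h => hlt (hiff.mpr h)
        have e1 : sg (a j) = 1 := by simp [sg, hlt]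
        have e2 : sg (b j) = 1 := by simp [sg, hlt']
        rw [e1, e2] at h1; linarith
    · simpa [hφ, hj] using h1
  have hsurj : Set.SurjOn φ (Aset L ε n)
      {a | a ∈ Aset L ε (n + q * T.card) ∧ ∀ j ∈ T, 2*(q:ℤ) < |a j|} := by
    rintro b ⟨⟨hbL, hbsum, hbpar⟩, hbig⟩
    have hoddB := hodd b hbL
    set a : Fin m → ℤ := fun j => if j ∈ T then b j - 2*(q:ℤ)*sg (b j) else b j with ha
    have hoddA : ∀ j, Odd (a j) := by
      intro j
      by_cases hj : j ∈ T
      · simp only [ha, if_pos hj]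
        exact (hoddB j).sub_even ⟨(q:ℤ)*sg (b j), by ring⟩
      · simpa [ha, hj] using hoddB j
    have hphi : φ a = b := by
      funext j
      by_cases hj : j ∈ T
      · have hs := (sg_sub_spec q (hbig j hj)).2.2
        simp only [hφ, ha, if_pos hj]
        rw [hs]; ring
      · simp [hφ, ha, hj]
    have haL : a ∈ L := by
      refine (hinv a (fun j => if j ∈ T then sg (a j) else 0) hoddA).mpr ?_
      have : (fun j => a j + 2*(q:ℤ) * (if j ∈ T then sg (a j) else 0)) = b := hphi
      rw [this]; exact hbL
    have habs : ∀ j, |a j| = |b j| - (if j ∈ T then 2*(q:ℤ) else 0) := by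
      intro j
      by_cases hj : j ∈ T
      · simp only [ha, if_pos hj]
        rw [(sg_sub_spec q (hbig j hj)).2.1]
      · simp [ha, hj]
    have hsumA : (∑ j, |a j|) = 2*(n:ℤ) + m := by
      rw [Finset.sum_congr rfl (fun j _ => habs j), Finset.sum_sub_distrib, hbsum,
        Finset.sum_ite_mem, Finset.univ_inter, Finset.sum_const]
      push_cast
      ring
    have hparA : negCount a = negCount b := by
      unfold negCount
      congr 1
      apply Finset.filter_congr
      intro j _
      by_cases hj : j ∈ T
      · simp only [ha, if_pos hj]
        simp [(sg_sub_spec q (hbig j hj)).1]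
      · simp [ha, hj]
    exact ⟨a, ⟨haL, hsumA, by rw [hparA]; exact hbpar⟩, hphi⟩
  have hbij : Set.BijOn φ (Aset L ε n)
      {a | a ∈ Aset L ε (n + q * T.card) ∧ ∀ j ∈ T, 2*(q:ℤ) < |a j|} :=
    ⟨hmap, hinj, hsurj⟩
  rw [Ncount_eq, ← hbij.image_eq, Set.ncard_image_of_injOn hinj]

lemma key_rec (q : ℕ) {m : ℕ} (hm : 0 < m) (L : Set (Fin m → ℤ))
    (hodd : ∀ a ∈ L, ∀ j, Odd (a j))
    (hinv : ∀ (a h : Fin m → ℤ), (∀ j, Odd (a j)) →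
      (a ∈ L ↔ (fun j => a j + 2 * (q : ℤ) * h j) ∈ L))
    (ε k : ℕ) (hk : m * q ≤ k) :
    ∑ T ∈ (Finset.univ : Finset (Fin m)).powerset,
      (-1:ℤ)^T.card * (Ncount L ε (k - q * T.card) : ℤ) = 0 := by
  classical
  have hfin := Aset_finite L ε k
  set A := hfin.toFinset with hA
  have hterm : ∀ T ∈ (Finset.univ : Finset (Fin m)).powerset,
      (Ncount L ε (k - q * T.card) : ℤ)
        = ((A.filter fun a => ∀ j ∈ T, 2*(q:ℤ) < |a j|).card : ℤ) := by
    intro T hT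
    have hcard : q * T.card ≤ k := by
      have h1 : T.card ≤ m := by
        simpa using Finset.card_le_card (Finset.mem_powerset.mp hT)
      calc q * T.card ≤ q * m := Nat.mul_le_mul_left q h1
        _ = m * q := Nat.mul_comm q m
        _ ≤ k := hk
    have hn : (k - q * T.card) + q * T.card = k := Nat.sub_add_cancel hcard
    have hsh := shift_ncard q L hodd hinv ε (k - q * T.card) T
    rw [hn] at hsh
    norm_cast
    rw [← hsh, ← Set.ncard_coe_finset]
    congr 1
    ext a
    simp [hA, Set.Finite.mem_toFinset]
  rw [Finset.sum_congr rfl (fun T hT => by rw [hterm T hT])]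
  have hswap : ∀ T : Finset (Fin m),
      ((A.filter fun a => ∀ j ∈ T, 2*(q:ℤ) < |a j|).card : ℤ)
        = ∑ a ∈ A, if ∀ j ∈ T, 2*(q:ℤ) < |a j| then (1:ℤ) else 0 := by
    intro T
    rw [Finset.card_filter, Nat.cast_sum]
    exact Finset.sum_congr rfl fun a _ => by split <;> simp
  rw [Finset.sum_congr rfl (fun T _ => by rw [hswap, Finset.mul_sum]), Finset.sum_comm]
  refine Finset.sum_eq_zero fun a haA => ?_
  set B := Finset.univ.filter (fun j => 2*(q:ℤ) < |a j|) with hB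
  have hsub : ∀ T : Finset (Fin m), ((∀ j ∈ T, 2*(q:ℤ) < |a j|) ↔ T ⊆ B) := by
    intro T
    simp [hB, Finset.subset_iff]
  have h1 : ∑ T ∈ (Finset.univ : Finset (Fin m)).powerset,
        (-1:ℤ)^T.card * (if ∀ j ∈ T, 2*(q:ℤ) < |a j| then (1:ℤ) else 0)
      = ∑ T ∈ B.powerset,
        (-1:ℤ)^T.card * (if ∀ j ∈ T, 2*(q:ℤ) < |a j| then (1:ℤ) else 0) :=
    (Finset.sum_subset (Finset.powerset_mono.mpr (Finset.subset_univ B))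
      (fun T _ hT => by
        rw [if_neg (fun h => hT (Finset.mem_powerset.mpr ((hsub T).mp h))), mul_zero])).symm
  rw [h1, Finset.sum_congr rfl (fun T hT => by
    rw [if_pos ((hsub T).mpr (Finset.mem_powerset.mp hT)), mul_one])]
  apply Finset.sum_powerset_neg_one_pow_card_of_nonempty
  obtain ⟨-, hsum, -⟩ := hfin.mem_toFinset.mp haA
  rw [Finset.filter_nonempty_iff]
  by_contra hc
  push_neg at hc
  have hle : ∀ j, |a j| ≤ 2*(q:ℤ) := fun j => hc j (Finset.mem_univ j)
  have hsle : (∑ j, |a j|) ≤ ∑ _j : Fin m, 2*(q:ℤ) := Finset.sum_le_sum fun j _ => hle j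
  rw [hsum, Finset.sum_const, Finset.card_univ, Fintype.card_fin, nsmul_eq_mul] at hsle
  have hk' : (m:ℤ) * q ≤ k := by exact_mod_cast hk
  have hm' : (0:ℤ) < m := by exact_mod_cast hm
  nlinarith

theorem isospectral_of_eq_below_mq (q m : ℕ) (hq : 0 < q) (hm : 0 < m)
    (L L' : Set (Fin m → ℤ))
    (hodd : ∀ a ∈ L, ∀ j, Odd (a j)) (hodd' : ∀ a ∈ L', ∀ j, Odd (a j))
    (hinv : ∀ (a h : Fin m → ℤ), (∀ j, Odd (a j)) →
      (a ∈ L ↔ (fun j => a j + 2 * (q : ℤ) * h j) ∈ L))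
    (hinv' : ∀ (a h : Fin m → ℤ), (∀ j, Odd (a j)) →
      (a ∈ L' ↔ (fun j => a j + 2 * (q : ℤ) * h j) ∈ L'))
    (heq : ∀ ε k : ℕ, (ε = 0 ∨ ε = 1) → k < m * q → Ncount L ε k = Ncount L' ε k) :
    ∀ ε k : ℕ, (ε = 0 ∨ ε = 1) → Ncount L ε k = Ncount L' ε k := by
  intro ε k hε
  induction k using Nat.strong_induction_on with
  | _ k IH =>
    by_cases hk : k < m * q
    · exact heq ε k hε hk
    · push_neg at hk
      have h1 := key_rec q hm L hodd hinv ε k hk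
      have h2 := key_rec q hm L' hodd' hinv' ε k hk
      have hmem : ∅ ∈ (Finset.univ : Finset (Fin m)).powerset :=
        Finset.empty_mem_powerset _
      rw [← Finset.add_sum_erase _ _ hmem] at h1 h2
      simp only [Finset.card_empty, pow_zero, one_mul, Nat.mul_zero, Nat.sub_zero] at h1 h2
      have hS : ∑ T ∈ ((Finset.univ : Finset (Fin m)).powerset.erase ∅),
            (-1:ℤ)^T.card * (Ncount L ε (k - q * T.card) : ℤ)
          = ∑ T ∈ ((Finset.univ : Finset (Fin m)).powerset.erase ∅),
            (-1:ℤ)^T.card * (Ncount L' ε (k - q * T.card) : ℤ) := by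
        apply Finset.sum_congr rfl
        intro T hT
        have hT0 : T ≠ ∅ := (Finset.mem_erase.mp hT).1
        have hTc : 1 ≤ T.card :=
          Finset.card_pos.mpr (Finset.nonempty_iff_ne_empty.mpr hT0)
        have hk0 : 0 < k := lt_of_lt_of_le (Nat.mul_pos hm hq) hk
        have hqc : 0 < q * T.card := Nat.mul_pos hq hTc
        have hlt : k - q * T.card < k := Nat.sub_lt hk0 hqc
        rw [IH _ hlt]
      rw [hS] at h1
      have : (Ncount L ε k : ℤ) = (Ncount L' ε k : ℤ) := by linarith
      exact_mod_cast this
end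

section
/- Let r be a positive odd integer and let 𝓛 = 𝓛(r²; 1, 1+r, 1+2r, 1+4r). Let k = ωr + k₀ with integers ω ≥ 0 and 0 ≤ k₀ < r. Let z₀ be the unique integer with 0 ≤ z₀ < r and 2z₀ ≡ k+1 (mod r), and for integers γ and 0 ≤ y₀ < r let x_{y₀,γ} be the unique integer with 0 ≤ x_{y₀,γ} < r and 2x_{y₀,γ} ≡ 1 − 2y₀ + 12z₀ − 2(ω − 2γ + (k₀+1−2z₀)/r) (mod r). Then the number of elements μ = ½(a,b,c,d) ∈ 𝓛 with a > 0, b > 0, c > 0, d < 0 and ‖μ‖₁ = k+2 equals Σ_{γ=0}^{ω+⌊(k₀−z₀)/r⌋} Σ_{y₀=0}^{r−1} Σ_{β=γ+⌈(z₀−y₀)/r⌉}^{ω+⌊(k₀−y₀)/r⌋} ( ω − β + 1 + ⌊(k₀−x_{y₀,γ})/r⌋ + ⌊(x_{y₀,γ}−y₀)/r⌋ ), where empty sums are 0. -/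
/-!
Write a point of the orthant as `(2A+1, 2B+1, 2C+1, -(2D+1))` with `A, B, C, D ≥ 0` and
`A + B + C + D = k`. The lattice form then equals `2(k + 1 - 2D) + r(2B + 4C - 8D - 1)`, so
divisibility by `r²` forces `2D ≡ k + 1 ≡ 2z₀`, i.e. `D = z₀ + rγ` since `r` is odd. Writing
`C + D = y₀ + rβ` with `0 ≤ y₀ < r`, what is left of the condition is `B ≡ x_{y₀,γ} - y₀ (mod r)`.
For fixed `(γ, y₀, β)` the admissible `B` form this residue class in `[0, k - y₀ - rβ]` (and `A`
is then determined), whose size is the summand.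
-/

open Finset

namespace OrthantCount

variable {r : ℕ}

lemma le_add_floor_div_iff (hr : 0 < r) {m n a : ℤ} :
    n ≤ m + ⌊(a : ℚ) / r⌋ ↔ (n - m) * r ≤ a := by
  rw [← sub_le_iff_le_add', Int.le_floor, le_div_iff₀ (by exact_mod_cast hr)]
  exact_mod_cast Iff.rfl

lemma add_ceil_div_le_iff (hr : 0 < r) {m n a : ℤ} :
    m + ⌈(a : ℚ) / r⌉ ≤ n ↔ a ≤ (n - m) * r := by
  rw [← le_sub_iff_add_le', Int.ceil_le, div_le_iff₀ (by exact_mod_cast hr)]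
  exact_mod_cast Iff.rfl

lemma floor_mul_add_div (hr : 0 < r) (n a : ℤ) :
    ⌊((n * r + a : ℤ) : ℚ) / r⌋ = n + ⌊(a : ℚ) / r⌋ := by
  have hr' : (r : ℚ) ≠ 0 := by positivity
  push_cast
  rw [add_div, mul_div_cancel_right₀ _ hr', Int.floor_intCast_add]

lemma floor_neg_one_sub_div (hr : 0 < r) (v : ℤ) :
    ⌊((-1 - v : ℤ) : ℚ) / r⌋ = -⌊(v : ℚ) / r⌋ - 1 := by
  have hr' : (0 : ℤ) < r := by exact_mod_cast hr
  rw [Rat.floor_intCast_div_natCast, Rat.floor_intCast_div_natCast, Int.ediv_eq_iff_of_pos hr']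
  constructor <;>
    nlinarith [Int.emod_add_mul_ediv v r, Int.emod_nonneg v hr'.ne', Int.emod_lt_of_pos v hr']

lemma card_filter_Icc_zero_modEq (hr : 0 < r) {M : ℤ} (hM : -1 ≤ M) (v : ℤ) :
    (#{B ∈ Icc 0 M | B ≡ v [ZMOD r]} : ℤ) = ⌊((M - v : ℤ) : ℚ) / r⌋ + ⌊(v : ℚ) / r⌋ + 1 := by
  have hIcc : Icc 0 M = Ioc (-1) M := by ext; simp only [mem_Icc, mem_Ioc]; omega
  have hmono : ⌊((-1 - v : ℤ) : ℚ) / r⌋ ≤ ⌊((M - v : ℤ) : ℚ) / r⌋ := by gcongr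
  have hcard := Int.Ioc_filter_modEq_card (-1) M (r := r) (by exact_mod_cast hr) v
  rw [← Int.cast_sub, ← Int.cast_sub, Int.cast_natCast, max_eq_left (by omega),
    floor_neg_one_sub_div hr] at hcard
  rw [hIcc, hcard]
  ring

lemma dvd_two_mul_iff (hr : Odd r) {t : ℤ} : (r : ℤ) ∣ 2 * t ↔ (r : ℤ) ∣ t := by
  have hco : IsCoprime (r : ℤ) 2 := by
    simpa using Nat.isCoprime_iff_coprime.2 (Nat.coprime_two_right.2 hr)
  exact ⟨hco.dvd_of_dvd_mul_left, (Dvd.dvd.mul_left · 2)⟩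

lemma modEq_of_sq_dvd (hr : Odd r) {n z₀ D t : ℤ} (hz₀ : 2 * z₀ ≡ n + 1 [ZMOD r])
    (h : (r : ℤ) ^ 2 ∣ 2 * (n + 1 - 2 * D) + r * t) : D ≡ z₀ [ZMOD r] := by
  have hD : (r : ℤ) ∣ 2 * (n + 1 - 2 * D) :=
    (dvd_add_left (dvd_mul_right _ t)).1 ((dvd_pow_self _ two_ne_zero).trans h)
  have hz : (r : ℤ) ∣ n + 1 - 2 * z₀ := hz₀.dvd
  rw [Int.modEq_iff_dvd, ← dvd_two_mul_iff hr]
  have hsub := dvd_sub ((dvd_two_mul_iff hr).1 hD) hz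
  rwa [show n + 1 - 2 * D - (n + 1 - 2 * z₀) = 2 * (z₀ - D) by ring] at hsub

lemma sq_dvd_iff_modEq (hr : Odd r) {ω k₀ z₀ γ y₀ β x B C D : ℤ}
    (hz₀ : 2 * z₀ ≡ ω * r + k₀ + 1 [ZMOD r]) (hD : D = z₀ + r * γ) (hCD : C + D = y₀ + r * β)
    (hx : 2 * x ≡ 1 - 2 * y₀ + 12 * z₀ - 2 * (ω - 2 * γ + (k₀ + 1 - 2 * z₀) / r) [ZMOD r]) :
    (r : ℤ) ^ 2 ∣ 2 * (ω * r + k₀ + 1 - 2 * D) + r * (2 * B + 4 * C - 8 * D - 1) ↔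
      B ≡ x - y₀ [ZMOD r] := by
  have hr0 : (r : ℤ) ≠ 0 := by exact_mod_cast hr.pos.ne'
  have he : (r : ℤ) * ((k₀ + 1 - 2 * z₀) / r) = k₀ + 1 - 2 * z₀ := by
    refine Int.mul_ediv_cancel' ((dvd_add_right (dvd_mul_left (r : ℤ) ω)).1 ?_)
    simpa only [add_assoc, add_sub_assoc] using hz₀.dvd
  obtain ⟨t, ht⟩ := hx.dvd
  have hform : 2 * (ω * r + k₀ + 1 - 2 * D) + r * (2 * B + 4 * C - 8 * D - 1) =
      r * (2 * (B - (x - y₀)) + r * (4 * β - 12 * γ - t)) := by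
    linear_combination -2 * he - (r : ℤ) * ht + 4 * (r : ℤ) * hCD - (4 + 12 * (r : ℤ)) * hD
  rw [hform, sq, mul_dvd_mul_iff_left hr0, dvd_add_left (dvd_mul_right _ _), dvd_two_mul_iff hr,
    Int.modEq_comm, Int.modEq_iff_dvd]

/-- `v = 2μ` for a point `μ` of `𝓛(r²; 1, 1+r, 1+2r, 1+4r)` in the orthant `(+,+,+,−)` with
`‖μ‖₁ = n + 2`. -/
def IsOrthantPoint (r : ℕ) (n : ℤ) (v : ℤ × ℤ × ℤ × ℤ) : Prop :=
  Odd v.1 ∧ Odd v.2.1 ∧ Odd v.2.2.1 ∧ Odd v.2.2.2 ∧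
    0 < v.1 ∧ 0 < v.2.1 ∧ 0 < v.2.2.1 ∧ v.2.2.2 < 0 ∧
    |v.1| + |v.2.1| + |v.2.2.1| + |v.2.2.2| = 2 * n + 4 ∧
    ((r : ℤ) ^ 2 ∣ v.1 + (1 + (r : ℤ)) * v.2.1 + (1 + 2 * (r : ℤ)) * v.2.2.1 +
      (1 + 4 * (r : ℤ)) * v.2.2.2)

lemma isOrthantPoint_iff {n : ℤ} {v : ℤ × ℤ × ℤ × ℤ} :
    IsOrthantPoint r n v ↔ ∃ A B C D : ℤ, (0 ≤ A ∧ 0 ≤ B ∧ 0 ≤ C ∧ 0 ≤ D) ∧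
      A + B + C + D = n ∧
      (r : ℤ) ^ 2 ∣ 2 * (n + 1 - 2 * D) + r * (2 * B + 4 * C - 8 * D - 1) ∧
      v = (2 * A + 1, 2 * B + 1, 2 * C + 1, -(2 * D + 1)) := by
  obtain ⟨a, b, c, d⟩ := v
  constructor
  · rintro ⟨⟨A, rfl⟩, ⟨B, rfl⟩, ⟨C, rfl⟩, ⟨D, rfl⟩, ha, hb, hc, hd, hnorm, hdvd⟩
    dsimp only at ha hb hc hd hnorm hdvd
    rw [abs_of_pos ha, abs_of_pos hb, abs_of_pos hc, abs_of_neg hd] at hnorm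
    refine ⟨A, B, C, -D - 1, by omega, by linarith, ?_,
      by simp only [Prod.mk.injEq, true_and]; ring⟩
    convert hdvd using 1
    linear_combination -hnorm
  · rintro ⟨A, B, C, D, ⟨hA, hB, hC, hD⟩, hsum, hdvd, hv⟩
    simp only [Prod.mk.injEq] at hv
    obtain ⟨rfl, rfl, rfl, rfl⟩ := hv
    refine ⟨⟨A, rfl⟩, ⟨B, rfl⟩, ⟨C, rfl⟩, ⟨-D - 1, by ring⟩, ?_⟩
    dsimp only
    refine ⟨by omega, by omega, by omega, by omega, ?_, ?_⟩
    · rw [abs_of_pos (by omega), abs_of_pos (by omega), abs_of_pos (by omega),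
        abs_of_neg (by omega)]
      linarith
    · convert hdvd using 1
      linear_combination 2 * hsum

/-- Parameters `⟨γ, y₀, β, B⟩` of the point `(2A+1, 2B+1, 2C+1, -(2D+1))` with
`D = z₀ + rγ`, `C + D = y₀ + rβ` and `A + B + C + D = ωr + k₀`. -/
noncomputable def orthantIndex (r : ℕ) (ω k₀ z₀ : ℤ) (x : ℤ → ℤ → ℤ) :
    Finset (Σ _ : ℤ, Σ _ : ℤ, Σ _ : ℤ, ℤ) :=
  (Icc 0 (ω + ⌊((k₀ - z₀ : ℤ) : ℚ) / r⌋)).sigma fun γ =>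
    (Icc 0 ((r : ℤ) - 1)).sigma fun y₀ =>
      (Icc (γ + ⌈((z₀ - y₀ : ℤ) : ℚ) / r⌉) (ω + ⌊((k₀ - y₀ : ℤ) : ℚ) / r⌋)).sigma fun β =>
        {B ∈ Icc 0 (ω * r + k₀ - y₀ - r * β) | B ≡ x y₀ γ - y₀ [ZMOD r]}

def orthantPoint (r : ℕ) (n z₀ : ℤ) : (Σ _ : ℤ, Σ _ : ℤ, Σ _ : ℤ, ℤ) → ℤ × ℤ × ℤ × ℤ
  | ⟨γ, y₀, β, B⟩ =>
    (2 * (n - y₀ - r * β - B) + 1, 2 * B + 1, 2 * (y₀ + r * β - z₀ - r * γ) + 1,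
      -(2 * (z₀ + r * γ) + 1))

variable {ω k₀ z₀ : ℤ} {x : ℤ → ℤ → ℤ}

lemma mem_orthantIndex (hr : 0 < r) (hz₀0 : 0 ≤ z₀) (hz₀r : z₀ < r) {γ y₀ β B : ℤ} :
    ⟨γ, y₀, β, B⟩ ∈ orthantIndex r ω k₀ z₀ x ↔
      (0 ≤ y₀ ∧ y₀ < r) ∧
      (0 ≤ z₀ + r * γ ∧ z₀ + r * γ ≤ y₀ + r * β ∧ 0 ≤ B ∧ y₀ + r * β + B ≤ ω * r + k₀) ∧
      B ≡ x y₀ γ - y₀ [ZMOD r] := by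
  simp only [orthantIndex, mem_sigma, mem_filter, mem_Icc, le_add_floor_div_iff hr,
    add_ceil_div_le_iff hr]
  have hr' : (0 : ℤ) < r := by exact_mod_cast hr
  constructor
  · rintro ⟨⟨hγ, hγω⟩, ⟨hy, hyr⟩, ⟨hβγ, hβω⟩, ⟨hB, hBM⟩, hmod⟩
    exact ⟨⟨hy, by omega⟩,
      ⟨add_nonneg hz₀0 (mul_nonneg hr'.le hγ), by linarith, hB, by linarith⟩, hmod⟩
  · rintro ⟨⟨hy, hyr⟩, ⟨hD, hCD, hB, hsum⟩, hmod⟩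
    have hγ : 0 ≤ γ := by
      by_contra! hγ
      nlinarith
    exact ⟨⟨hγ, by linarith⟩, ⟨hy, by omega⟩, ⟨by linarith, by linarith⟩, ⟨hB, by linarith⟩, hmod⟩

lemma card_orthantIndex (hr : 0 < r) :
    (#(orthantIndex r ω k₀ z₀ x) : ℤ) =
      ∑ γ ∈ Icc 0 (ω + ⌊((k₀ - z₀ : ℤ) : ℚ) / r⌋), ∑ y₀ ∈ Icc 0 ((r : ℤ) - 1),
        ∑ β ∈ Icc (γ + ⌈((z₀ - y₀ : ℤ) : ℚ) / r⌉) (ω + ⌊((k₀ - y₀ : ℤ) : ℚ) / r⌋),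
          (ω - β + 1 + ⌊((k₀ - x y₀ γ : ℤ) : ℚ) / r⌋ + ⌊((x y₀ γ - y₀ : ℤ) : ℚ) / r⌋) := by
  simp only [orthantIndex, card_sigma, Nat.cast_sum]
  refine sum_congr rfl fun γ _ => sum_congr rfl fun y₀ _ => sum_congr rfl fun β hβ => ?_
  have hM : (β - ω) * r ≤ k₀ - y₀ := (le_add_floor_div_iff hr).1 (mem_Icc.1 hβ).2
  rw [card_filter_Icc_zero_modEq hr (by linarith),
    show ω * r + k₀ - y₀ - r * β - (x y₀ γ - y₀) = (ω - β) * r + (k₀ - x y₀ γ) by ring,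
    floor_mul_add_div hr]
  ring

lemma orthantPoint_injOn (hr : 0 < r) (hz₀0 : 0 ≤ z₀) (hz₀r : z₀ < r) (n : ℤ) :
    Set.InjOn (orthantPoint r n z₀) (orthantIndex r ω k₀ z₀ x) := by
  have hr0 : (r : ℤ) ≠ 0 := by exact_mod_cast hr.ne'
  rintro ⟨γ, y₀, β, B⟩ hq ⟨γ', y₀', β', B'⟩ hq' heq
  rw [mem_coe, mem_orthantIndex hr hz₀0 hz₀r] at hq hq'
  simp only [orthantPoint, Prod.mk.injEq] at heq
  obtain ⟨-, hB, hC, hD⟩ := heq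
  obtain rfl : γ = γ' := mul_left_cancel₀ hr0 (by linarith)
  obtain rfl : B = B' := by linarith
  have hCD : y₀ + r * β = y₀' + r * β' := by linarith
  obtain rfl : y₀ = y₀' := by
    rw [← Int.emod_eq_of_lt hq.1.1 hq.1.2, ← Int.emod_eq_of_lt hq'.1.1 hq'.1.2,
      ← Int.add_mul_emod_self_left y₀ r β, hCD, Int.add_mul_emod_self_left]
  obtain rfl : β = β' := mul_left_cancel₀ hr0 (by linarith)
  rfl

lemma setOf_isOrthantPoint_eq (hr : 0 < r) (hrodd : Odd r) (hz₀0 : 0 ≤ z₀) (hz₀r : z₀ < r)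
    (hz₀ : 2 * z₀ ≡ ω * r + k₀ + 1 [ZMOD r])
    (hx : ∀ y₀ γ : ℤ, 0 ≤ y₀ → y₀ < r →
      2 * x y₀ γ ≡ 1 - 2 * y₀ + 12 * z₀ - 2 * (ω - 2 * γ + (k₀ + 1 - 2 * z₀) / r) [ZMOD r]) :
    {v | IsOrthantPoint r (ω * r + k₀) v} =
      (orthantIndex r ω k₀ z₀ x).image (orthantPoint r (ω * r + k₀) z₀) := by
  ext v
  simp only [Set.mem_ofPred_eq, coe_image, Set.mem_image, mem_coe, isOrthantPoint_iff]
  constructor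
  · rintro ⟨A, B, C, D, ⟨hA, hB, hC, hD⟩, hsum, hdvd, rfl⟩
    obtain ⟨γ, hγ⟩ := (modEq_of_sq_dvd hrodd hz₀ hdvd).symm.dvd
    have hCD := Int.emod_add_mul_ediv (C + D) r
    set y₀ := (C + D) % r
    set β := (C + D) / r
    have hy₀ : 0 ≤ y₀ := Int.emod_nonneg _ (by exact_mod_cast hr.ne')
    have hy₀r : y₀ < r := Int.emod_lt_of_pos _ (by exact_mod_cast hr)
    have hmod : B ≡ x y₀ γ - y₀ [ZMOD r] :=
      (sq_dvd_iff_modEq hrodd hz₀ (by linarith) hCD.symm (hx y₀ γ hy₀ hy₀r)).1 hdvd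
    refine ⟨⟨γ, y₀, β, B⟩, (mem_orthantIndex hr hz₀0 hz₀r).2
      ⟨⟨hy₀, hy₀r⟩, ⟨by linarith, by linarith, hB, by linarith⟩, hmod⟩, ?_⟩
    simp only [orthantPoint, Prod.mk.injEq, true_and]
    exact ⟨by linarith, by linarith, by linarith⟩
  · rintro ⟨⟨γ, y₀, β, B⟩, hq, rfl⟩
    obtain ⟨⟨hy₀, hy₀r⟩, ⟨hD, hCD, hB, hsum⟩, hmod⟩ := (mem_orthantIndex hr hz₀0 hz₀r).1 hq
    exact ⟨ω * r + k₀ - y₀ - r * β - B, B, y₀ + r * β - z₀ - r * γ, z₀ + r * γ,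
      ⟨by linarith, hB, by linarith, hD⟩, by ring,
      (sq_dvd_iff_modEq hrodd hz₀ rfl (β := β) (by ring) (hx y₀ γ hy₀ hy₀r)).2 hmod, rfl⟩

end OrthantCount

open OrthantCount

theorem orthant_count_formula_general (r : ℕ) (hr : 0 < r) (hrodd : Odd r)
    (ω k₀ : ℤ)
    (z₀ : ℤ) (hz₀0 : 0 ≤ z₀) (hz₀r : z₀ < (r : ℤ))
    (hz₀ : 2 * z₀ ≡ ω * r + k₀ + 1 [ZMOD (r : ℤ)])
    (x : ℤ → ℤ → ℤ)
    (hx : ∀ y₀ γ : ℤ, 0 ≤ y₀ → y₀ < (r : ℤ) →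
      0 ≤ x y₀ γ ∧ x y₀ γ < (r : ℤ) ∧
      2 * x y₀ γ ≡
        1 - 2 * y₀ + 12 * z₀ - 2 * (ω - 2 * γ + (k₀ + 1 - 2 * z₀) / (r : ℤ))
        [ZMOD (r : ℤ)]) :
    (Set.ncard {v : ℤ × ℤ × ℤ × ℤ |
        Odd v.1 ∧ Odd v.2.1 ∧ Odd v.2.2.1 ∧ Odd v.2.2.2 ∧
        0 < v.1 ∧ 0 < v.2.1 ∧ 0 < v.2.2.1 ∧ v.2.2.2 < 0 ∧
        |v.1| + |v.2.1| + |v.2.2.1| + |v.2.2.2| = 2 * (ω * r + k₀) + 4 ∧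
        ((r : ℤ) ^ 2 ∣ v.1 + (1 + (r : ℤ)) * v.2.1 + (1 + 2 * (r : ℤ)) * v.2.2.1 +
          (1 + 4 * (r : ℤ)) * v.2.2.2)} : ℤ) =
      ∑ γ ∈ Finset.Icc (0 : ℤ) (ω + ⌊((k₀ - z₀ : ℤ) : ℚ) / (r : ℚ)⌋),
        ∑ y₀ ∈ Finset.Icc (0 : ℤ) ((r : ℤ) - 1),
          ∑ β ∈ Finset.Icc (γ + ⌈((z₀ - y₀ : ℤ) : ℚ) / (r : ℚ)⌉)
              (ω + ⌊((k₀ - y₀ : ℤ) : ℚ) / (r : ℚ)⌋),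
            (ω - β + 1 + ⌊((k₀ - x y₀ γ : ℤ) : ℚ) / (r : ℚ)⌋ +
              ⌊((x y₀ γ - y₀ : ℤ) : ℚ) / (r : ℚ)⌋) := by
  change (({v | IsOrthantPoint r (ω * r + k₀) v} : Set _).ncard : ℤ) = _
  rw [setOf_isOrthantPoint_eq hr hrodd hz₀0 hz₀r hz₀ fun y₀ γ h0 hlt => (hx y₀ γ h0 hlt).2.2,
    Set.ncard_coe_finset, card_image_of_injOn (orthantPoint_injOn hr hz₀0 hz₀r _),
    card_orthantIndex hr]

theorem orthant_count_formula (r : ℕ) (hr : 0 < r) (hrodd : Odd r)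
    (ω k₀ : ℤ) (hω : 0 ≤ ω) (hk₀ : 0 ≤ k₀) (hk₀r : k₀ < (r : ℤ))
    (z₀ : ℤ) (hz₀0 : 0 ≤ z₀) (hz₀r : z₀ < (r : ℤ))
    (hz₀ : 2 * z₀ ≡ ω * r + k₀ + 1 [ZMOD (r : ℤ)])
    (x : ℤ → ℤ → ℤ)
    (hx : ∀ y₀ γ : ℤ, 0 ≤ y₀ → y₀ < (r : ℤ) →
      0 ≤ x y₀ γ ∧ x y₀ γ < (r : ℤ) ∧
      2 * x y₀ γ ≡
        1 - 2 * y₀ + 12 * z₀ - 2 * (ω - 2 * γ + (k₀ + 1 - 2 * z₀) / (r : ℤ))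
        [ZMOD (r : ℤ)]) :
    (Set.ncard {v : ℤ × ℤ × ℤ × ℤ |
        Odd v.1 ∧ Odd v.2.1 ∧ Odd v.2.2.1 ∧ Odd v.2.2.2 ∧
        0 < v.1 ∧ 0 < v.2.1 ∧ 0 < v.2.2.1 ∧ v.2.2.2 < 0 ∧
        |v.1| + |v.2.1| + |v.2.2.1| + |v.2.2.2| = 2 * (ω * r + k₀) + 4 ∧
        ((r : ℤ) ^ 2 ∣ v.1 + (1 + (r : ℤ)) * v.2.1 + (1 + 2 * (r : ℤ)) * v.2.2.1 +
          (1 + 4 * (r : ℤ)) * v.2.2.2)} : ℤ) =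
      ∑ γ ∈ Finset.Icc (0 : ℤ) (ω + ⌊((k₀ - z₀ : ℤ) : ℚ) / (r : ℚ)⌋),
        ∑ y₀ ∈ Finset.Icc (0 : ℤ) ((r : ℤ) - 1),
          ∑ β ∈ Finset.Icc (γ + ⌈((z₀ - y₀ : ℤ) : ℚ) / (r : ℚ)⌉)
              (ω + ⌊((k₀ - y₀ : ℤ) : ℚ) / (r : ℚ)⌋),
            (ω - β + 1 + ⌊((k₀ - x y₀ γ : ℤ) : ℚ) / (r : ℚ)⌋ +
              ⌊((x y₀ γ - y₀ : ℤ) : ℚ) / (r : ℚ)⌋) :=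
  orthant_count_formula_general r hr hrodd ω k₀ z₀ hz₀0 hz₀r hz₀ x hx
end

section
/- Let r ≥ 1 be an integer, set m = 4r+2, and for 0 ≤ p ≤ r let s^{(p)} ∈ ℤ^m be the tuple whose first m−2p coordinates are 1,11,1,11,…,1,11 (alternating) and whose last 2p coordinates are 21,31,…,21,31 (alternating). Then for each 0 ≤ p ≤ r there exist a permutation σ of {1,…,m} and signs ε_1,…,ε_m ∈ {±1} such that the associated signed-permutation map φ satisfies φ(𝓛(40; s^{(p)}; 0)) = 𝓛(40; s^{(p)}; 1). -/
/-! ### Auxiliary definitions -/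

def swF (r : ℕ) (i : Fin (4 * r + 2)) : Fin (4 * r + 2) :=
  ⟨if (i : ℕ) % 2 = 0 then (i : ℕ) + 1 else (i : ℕ) - 1, by
    have := i.isLt; split <;> omega⟩

lemma swF_invol (r : ℕ) : Function.Involutive (swF r) := by
  intro i
  have := i.isLt
  apply Fin.ext
  simp only [swF]
  split_ifs <;> omega

def sw (r : ℕ) : Equiv.Perm (Fin (4 * r + 2)) := (swF_invol r).toPerm

lemma sw_apply (r : ℕ) (i : Fin (4 * r + 2)) : sw r i = swF r i := rfl
lemma sw_symm_apply (r : ℕ) (i : Fin (4 * r + 2)) : (sw r).symm i = swF r i := rfl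
lemma sw_sw (r : ℕ) (i : Fin (4 * r + 2)) : sw r (sw r i) = i := swF_invol r i

def cF (r p : ℕ) : Fin (4 * r + 2) → ℤ := fun i =>
  if (i : ℕ) < 4 * r + 2 - 2 * p then (if (i : ℕ) % 2 = 0 then 0 else 3)
  else (if (i : ℕ) % 2 = 0 then 5 else 8)

lemma key (r p : ℕ) (hp : p ≤ r) (i : Fin (4 * r + 2)) :
    sFam r p (sw r i) = 11 * sFam r p i - 40 * cF r p i := by
  have hi := i.isLt
  rw [sw_apply]
  simp only [sFam, cF, swF]
  split_ifs <;> omega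

lemma sum_reindex (r p : ℕ) (b : Fin (4 * r + 2) → ℤ) :
    ∑ i, b (sw r i) * sFam r p i = ∑ i, b i * sFam r p (sw r i) :=
  Fintype.sum_equiv (sw r) _ _ (fun i => by rw [sw_sw])

/-! ### Parity of the correction sum -/

def cz (K : ℕ) : ℕ → ZMod 2 := fun n =>
  if n < K then (if n % 2 = 0 then 0 else 1) else (if n % 2 = 0 then 1 else 0)

lemma sum_alt (K m : ℕ) (hm : 2 * m ≤ K) :
    ∑ n ∈ Finset.range (2 * m), cz K n = (m : ZMod 2) := by
  induction m with
  | zero => simp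
  | succ m ih =>
    rw [show 2 * (m + 1) = (2 * m + 1) + 1 by ring, Finset.sum_range_succ,
      Finset.sum_range_succ, ih (by omega)]
    have e1 : cz K (2 * m) = 0 := by
      simp only [cz]; split_ifs <;> first | rfl | omega
    have e2 : cz K (2 * m + 1) = 1 := by
      simp only [cz]; split_ifs <;> first | rfl | omega
    rw [e1, e2]
    push_cast
    ring

lemma sum_cz (K j : ℕ) (hK : K % 2 = 0) :
    ∑ n ∈ Finset.range (K + 2 * j), cz K n = ((K / 2 + j : ℕ) : ZMod 2) := by
  induction j with
  | zero =>
    have h := sum_alt K (K / 2) (by omega)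
    rw [show K + 2 * 0 = 2 * (K / 2) by omega, h]
    norm_num
  | succ j ih =>
    rw [show K + 2 * (j + 1) = (K + 2 * j + 1) + 1 by ring, Finset.sum_range_succ,
      Finset.sum_range_succ, ih]
    have e1 : cz K (K + 2 * j) = 1 := by
      simp only [cz]; split_ifs <;> first | rfl | omega
    have e2 : cz K (K + 2 * j + 1) = 0 := by
      simp only [cz]; split_ifs <;> first | rfl | omega
    rw [e1, e2]
    push_cast
    ring

lemma sum_cz' (K N : ℕ) (hK : K % 2 = 0) (hKN : K ≤ N) (hN : N % 2 = 0) :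
    ∑ n ∈ Finset.range N, cz K n = ((K / 2 + (N - K) / 2 : ℕ) : ZMod 2) := by
  obtain ⟨j, rfl⟩ : ∃ j, N = K + 2 * j := ⟨(N - K) / 2, by omega⟩
  rw [sum_cz K j hK]
  congr 1
  omega

lemma cF_cast (r p : ℕ) (i : Fin (4 * r + 2)) :
    ((cF r p i : ℤ) : ZMod 2) = cz (4 * r + 2 - 2 * p) (i : ℕ) := by
  simp only [cF, cz]
  split_ifs <;> first | rfl | decide | omega

lemma two_eq_zero : (2 : ZMod 2) = 0 := rfl

lemma odd_C (r p : ℕ) (hp : p ≤ r) (b : Fin (4 * r + 2) → ℤ) (hb : ∀ j, Odd (b j)) :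
    Odd (∑ i, b i * cF r p i) := by
  rw [← Int.not_even_iff_odd]
  intro h
  have h0 : ((∑ i, b i * cF r p i : ℤ) : ZMod 2) = 0 :=
    (ZMod.intCast_zmod_eq_zero_iff_dvd _ 2).2 h.two_dvd
  have hb1 : ∀ i, ((b i : ℤ) : ZMod 2) = 1 := by
    intro i
    obtain ⟨k, hk⟩ := hb i
    rw [hk]
    push_cast
    rw [two_eq_zero]
    ring
  rw [Int.cast_sum] at h0
  have h1 : ∀ i ∈ Finset.univ, ((b i * cF r p i : ℤ) : ZMod 2)
      = cz (4 * r + 2 - 2 * p) (i : ℕ) := by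
    intro i _
    rw [Int.cast_mul, hb1, one_mul, cF_cast]
  rw [Finset.sum_congr rfl h1] at h0
  rw [Fin.sum_univ_eq_sum_range (fun n => cz (4 * r + 2 - 2 * p) n) (4 * r + 2)] at h0
  rw [sum_cz' (4 * r + 2 - 2 * p) (4 * r + 2) (by omega) (by omega) (by omega)] at h0
  rw [show (4 * r + 2 - 2 * p) / 2 + (4 * r + 2 - (4 * r + 2 - 2 * p)) / 2 = 2 * r + 1 by omega] at h0
  have : ((2 * r + 1 : ℕ) : ZMod 2) = 1 := by
    push_cast
    rw [two_eq_zero]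
    ring
  rw [this] at h0
  exact one_ne_zero h0

/-! ### Core equivalence mod 80 -/

lemma core (r p : ℕ) (hp : p ≤ r) (b : Fin (4 * r + 2) → ℤ) (hb : ∀ j, Odd (b j)) :
    ((80 : ℤ) ∣ ∑ i, b (sw r i) * sFam r p i) ↔
      ((80 : ℤ) ∣ (∑ i, b i * sFam r p i) - 40) := by
  rw [sum_reindex]
  have h1 : ∑ i, b i * sFam r p (sw r i)
      = 11 * (∑ i, b i * sFam r p i) - 40 * (∑ i, b i * cF r p i) := by
    rw [Finset.mul_sum, Finset.mul_sum, ← Finset.sum_sub_distrib]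
    exact Finset.sum_congr rfl fun i _ => by rw [key r p hp]; ring
  rw [h1]
  obtain ⟨k, hk⟩ := odd_C r p hp b hb
  rw [hk]
  have cop : IsCoprime (80 : ℤ) 11 := by
    rw [Int.isCoprime_iff_gcd_eq_one]
    rfl
  constructor
  · intro h
    have h2 : (80 : ℤ) ∣ (∑ i, b i * sFam r p i - 40) * 11 := by
      have e : (∑ i, b i * sFam r p i - 40) * 11
          = (11 * (∑ i, b i * sFam r p i) - 40 * (2 * k + 1)) + 80 * (k - 5) := by ring
      rw [e]
      exact dvd_add h ⟨k - 5, rfl⟩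
    exact cop.dvd_of_dvd_mul_right h2
  · rintro ⟨t, ht⟩
    refine ⟨11 * t - k + 5, ?_⟩
    linear_combination 11 * ht

theorem exists_signedPerm_switching_spin_structures (r : ℕ) (hr : 1 ≤ r)
    (p : ℕ) (hp : p ≤ r) :
    ∃ (σ : Equiv.Perm (Fin (4 * r + 2))) (ε : Fin (4 * r + 2) → ℤ),
      (∀ j, ε j = 1 ∨ ε j = -1) ∧
      signedPerm σ ε '' affLatH 40 (sFam r p) 0 = affLatH 40 (sFam r p) 1 := by
  refine ⟨sw r, fun _ => 1, fun j => Or.inl rfl, ?_⟩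
  have hmap : ∀ a : Fin (4 * r + 2) → ℤ,
      signedPerm (sw r) (fun _ => 1) a = fun i => a (sw r i) := by
    intro a
    funext i
    show (1 : ℤ) * a ((sw r).symm i) = a (sw r i)
    rw [one_mul, sw_symm_apply, sw_apply]
  ext b
  simp only [Set.mem_image]
  constructor
  · rintro ⟨a, ⟨haOdd, haDvd⟩, rfl⟩
    rw [hmap]
    refine ⟨fun j => haOdd _, ?_⟩
    have hsum : ∑ i, (fun j => a (sw r j)) (sw r i) * sFam r p i
        = ∑ i, a i * sFam r p i :=
      Finset.sum_congr rfl fun i _ => by simp only [sw_sw]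
    have hdvd : (80 : ℤ) ∣ ∑ i, a i * sFam r p i := by
      have := haDvd
      norm_num at this ⊢
      exact this
    have h2 : (80 : ℤ) ∣ (∑ i, (fun j => a (sw r j)) i * sFam r p i) - 40 := by
      have := (core r p hp (fun j => a (sw r j)) (fun j => haOdd _)).mp
        (by rw [hsum]; exact hdvd)
      exact this
    norm_num
    exact h2
  · rintro ⟨hbOdd, hbDvd⟩
    refine ⟨fun i => b (sw r i), ⟨fun j => hbOdd _, ?_⟩, ?_⟩
    · have hbd : (80 : ℤ) ∣ (∑ i, b i * sFam r p i) - 40 := by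
        have := hbDvd
        norm_num at this ⊢
        exact this
      have := (core r p hp b hbOdd).mpr hbd
      norm_num
      exact this
    · rw [hmap]
      funext i
      rw [sw_sw]
end

section
/- Let r ≥ 1 be an integer, set m = 4r+2, and for 0 ≤ p ≤ r let s^{(p)} ∈ ℤ^m be the tuple whose first m−2p coordinates are 1,11,1,11,…,1,11 (alternating) and whose last 2p coordinates are 21,31,…,21,31 (alternating). Then for every 0 ≤ p ≤ r the affine congruence lattices coincide: 𝓛(40; s^{(0)}) = 𝓛(40; s^{(p)}), i.e. for all odd integers a_1,…,a_m one has Σ_j a_j s^{(0)}_j ≡ 0 (mod 40) if and only if Σ_j a_j s^{(p)}_j ≡ 0 (mod 40). -/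
lemma card_filter_le_fin (n k : ℕ) :
    ((Finset.univ.filter fun j : Fin n => k ≤ (j : ℕ)).card) = n - k := by
  rw [Finset.card_filter]
  rw [Fin.sum_univ_eq_sum_range (fun j => if k ≤ j then 1 else 0)]
  rw [← Finset.card_filter, Finset.range_eq_Ico, Finset.Ico_filter_le, Nat.card_Ico]
  omega

lemma even_sum_odd {n : ℕ} (s : Finset (Fin n)) (a : Fin n → ℤ)
    (ha : ∀ j, Odd (a j)) (hc : Even s.card) : Even (∑ j ∈ s, a j) := by
  rw [Int.even_iff]
  rw [Finset.sum_int_mod]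
  have : ∀ j ∈ s, a j % 2 = 1 := fun j _ => Int.odd_iff.mp (ha j)
  rw [Finset.sum_congr rfl this, Finset.sum_const, nsmul_eq_mul, mul_one]
  obtain ⟨t, ht⟩ := hc
  omega

theorem affLat_sFam_eq (r : ℕ) (hr : 1 ≤ r) (p : ℕ) (hp : p ≤ r)
    (a : Fin (4 * r + 2) → ℤ) (ha : ∀ j, Odd (a j)) :
    ((40 : ℤ) ∣ ∑ j, a j * sFam r 0 j) ↔ ((40 : ℤ) ∣ ∑ j, a j * sFam r p j) := by
  have key : (40 : ℤ) ∣ (∑ j, a j * sFam r p j) - (∑ j, a j * sFam r 0 j) := by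
    rw [← Finset.sum_sub_distrib]
    have hterm : ∀ j : Fin (4 * r + 2),
        a j * sFam r p j - a j * sFam r 0 j =
          if 4 * r + 2 - 2 * p ≤ (j : ℕ) then 20 * a j else 0 := by
      intro j
      have hj : (j : ℕ) < 4 * r + 2 - 2 * 0 := by
        have := j.isLt; omega
      by_cases h : 4 * r + 2 - 2 * p ≤ (j : ℕ)
      · have h' : ¬ ((j : ℕ) < 4 * r + 2 - 2 * p) := by omega
        by_cases h2 : (j : ℕ) % 2 = 0 <;> simp [sFam, h, h', h2, hj] <;> ring
      · have h' : (j : ℕ) < 4 * r + 2 - 2 * p := by omega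
        simp [sFam, h, h', hj]
    rw [Finset.sum_congr rfl (fun j _ => hterm j), ← Finset.sum_filter]
    rw [← Finset.mul_sum]
    have hcard : ((Finset.univ.filter fun j : Fin (4 * r + 2) =>
        4 * r + 2 - 2 * p ≤ (j : ℕ)).card) = 2 * p := by
      rw [card_filter_le_fin]; omega
    have heven := even_sum_odd _ a ha (by rw [hcard]; exact even_two_mul p)
    obtain ⟨t, ht⟩ := heven
    refine ⟨t, ?_⟩
    rw [ht]; ring
  constructor
  · intro h
    have := dvd_add key h
    simpa using this
  · intro h
    have := dvd_sub h key
    simpa using this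
end
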